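/- arXiv:2408.07200 — 14 statements merged into one kernel-verified Lean document; each statement's English description precedes it below -/
import Mathlib

section
/- Let n = 2k with k ≥ 2, let s ≥ 1 and let a_1 < a_2 < ⋯ < a_s be integers with 1 ≤ a_1 and a_s ≤ k−1. Set S1 = {a_1,…,a_s, n−a_s,…,n−a_1} and S2 = {b_1,…,b_s, n−b_s,…,n−b_1}, where b_i = k − a_{s−i+1} for 1 ≤ i ≤ s. Then the circulant graphs G(ℤ_n, S1) and G(ℤ_n, S2) are singularly cospectral, i.e., the multisets of absolute values of the nonzero eigenvalues (with multiplicity) of their adjacency matrices coincide. -/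
open Polynomial

/-- Adjacency matrix (over ℝ) of the circulant graph `G(ℤ_n, S)`. -/
noncomputable def circAdj (n : ℕ) (S : Finset (ZMod n)) : Matrix (ZMod n) (ZMod n) ℝ :=
  fun i j => if j - i ∈ S then 1 else 0

/-- Multiset of eigenvalues (with multiplicity) of the circulant graph `G(ℤ_n, S)`. -/
noncomputable def circSpectrum (n : ℕ) [NeZero n] (S : Finset (ZMod n)) : Multiset ℝ :=
  (Matrix.charpoly (circAdj n S)).roots

/-- Multiset of absolute values of the nonzero eigenvalues. -/
noncomputable def absNonzeroSpectrum (n : ℕ) [NeZero n] (S : Finset (ZMod n)) : Multiset ℝ :=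
  ((circSpectrum n S).filter (fun x => x ≠ 0)).map (fun x => |x|)

section Aux

open Matrix

variable {m : Type*} [Fintype m] [DecidableEq m]

lemma my_charpoly_conj {R : Type*} [CommRing R] (A U V : Matrix m m R)
    (hUV : U * V = 1) (hVU : V * U = 1) :
    (U * A * V).charpoly = A.charpoly := by
  have hmap : ∀ M N : Matrix m m R, (M * N).map (C : R →+* R[X]) = M.map C * N.map C := by
    intro M N; exact Matrix.map_mul
  have key : charmatrix (U * A * V) = U.map C * charmatrix A * V.map C := by
    unfold charmatrix
    rw [Matrix.mul_sub, Matrix.sub_mul]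
    congr 1
    · have hd : (Matrix.diagonal (fun _ : m => (X : R[X]))) = (X : R[X]) • (1 : Matrix m m R[X]) := by
        ext i j; by_cases h : i = j <;> simp [Matrix.one_apply, h]
      symm
      show U.map C * Matrix.scalar m (X : R[X]) * V.map C = Matrix.scalar m (X : R[X])
      rw [Matrix.scalar_apply, hd, Matrix.mul_smul, Matrix.mul_one, Matrix.smul_mul, ← hmap, hUV]
      congr 1
      exact Matrix.map_one _ (map_zero C) (map_one C)
    · symm
      show U.map C * ((C : R →+* R[X]).mapMatrix A) * V.map C = (C : R →+* R[X]).mapMatrix (U*A*V)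
      rw [RingHom.mapMatrix_apply, RingHom.mapMatrix_apply, ← hmap, ← hmap]
  unfold Matrix.charpoly
  rw [key, Matrix.det_mul, Matrix.det_mul, mul_comm, ← mul_assoc, ← Matrix.det_mul, ← hmap, hVU]
  simp

lemma charmatrix_diagonal' (d : m → ℝ) :
    charmatrix (Matrix.diagonal d) = Matrix.diagonal (fun i => (X : ℝ[X]) - C (d i)) := by
  ext i j
  by_cases h : i = j
  · subst h; simp [charmatrix_apply_eq]
  · simp [charmatrix_apply_ne _ _ _ h, Matrix.diagonal_apply_ne _ h]

lemma roots_charpoly_diagonal (d : m → ℝ) :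
    (Matrix.diagonal d).charpoly.roots = Finset.univ.val.map d := by
  have h : (Matrix.diagonal d).charpoly
      = ((Finset.univ.val.map d).map fun a => X - C a).prod := by
    unfold Matrix.charpoly
    rw [charmatrix_diagonal', Matrix.det_diagonal, Multiset.map_map]
    rfl
  rw [h, Polynomial.roots_multiset_prod_X_sub_C]

lemma roots_charpoly_hermitian {A : Matrix m m ℝ} (hA : A.IsHermitian) :
    A.charpoly.roots = Finset.univ.val.map hA.eigenvalues := by
  have hU1 : (hA.eigenvectorUnitary : Matrix m m ℝ) * star (hA.eigenvectorUnitary : Matrix m m ℝ) = 1 :=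
    Matrix.mem_unitaryGroup_iff.mp hA.eigenvectorUnitary.2
  have hU2 : star (hA.eigenvectorUnitary : Matrix m m ℝ) * (hA.eigenvectorUnitary : Matrix m m ℝ) = 1 :=
    Matrix.mem_unitaryGroup_iff'.mp hA.eigenvectorUnitary.2
  have hspec := hA.spectral_theorem
  have hdiag : (RCLike.ofReal ∘ hA.eigenvalues : m → ℝ) = hA.eigenvalues := by
    funext i; simp
  rw [hdiag] at hspec
  have h : A.charpoly = (Matrix.diagonal hA.eigenvalues).charpoly := by
    conv_lhs => rw [hspec]
    exact my_charpoly_conj _ _ _ hU1 hU2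
  rw [h, roots_charpoly_diagonal]

lemma roots_charpoly_sq {A : Matrix m m ℝ} (hA : A.IsHermitian) :
    (A * A).charpoly.roots = A.charpoly.roots.map (fun x => x ^ 2) := by
  have hU1 : (hA.eigenvectorUnitary : Matrix m m ℝ) * star (hA.eigenvectorUnitary : Matrix m m ℝ) = 1 :=
    Matrix.mem_unitaryGroup_iff.mp hA.eigenvectorUnitary.2
  have hU2 : star (hA.eigenvectorUnitary : Matrix m m ℝ) * (hA.eigenvectorUnitary : Matrix m m ℝ) = 1 :=
    Matrix.mem_unitaryGroup_iff'.mp hA.eigenvectorUnitary.2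
  have hspec := hA.spectral_theorem
  have hdiag : (RCLike.ofReal ∘ hA.eigenvalues : m → ℝ) = hA.eigenvalues := by
    funext i; simp
  rw [hdiag] at hspec
  set U : Matrix m m ℝ := (hA.eigenvectorUnitary : Matrix m m ℝ) with hU
  set D : Matrix m m ℝ := Matrix.diagonal hA.eigenvalues with hD
  have e1 : A * A = U * (D * D) * star U := by
    rw [hspec]
    calc (U * D * star U) * (U * D * star U)
        = U * D * ((star U * U) * (D * star U)) := by noncomm_ring
      _ = U * (D * D) * star U := by rw [hU2, one_mul]; noncomm_ring
  have e2 : D * D = Matrix.diagonal (fun i => hA.eigenvalues i ^ 2) := by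
    rw [hD, Matrix.diagonal_mul_diagonal]
    congr 1; funext i; ring
  rw [e1, my_charpoly_conj _ _ _ hU1 hU2, e2, roots_charpoly_diagonal,
    roots_charpoly_hermitian hA, Multiset.map_map]
  rfl

lemma abs_filter_of_sq_eq {M N : Multiset ℝ}
    (h : M.map (fun x => x ^ 2) = N.map (fun x => x ^ 2)) :
    (M.filter (fun x => x ≠ 0)).map (fun x => |x|)
      = (N.filter (fun x => x ≠ 0)).map (fun x => |x|) := by
  have key : ∀ M : Multiset ℝ, (M.filter (fun x => x ≠ 0)).map (fun x => |x|)
      = ((M.map (fun x => x ^ 2)).filter (fun y => y ≠ 0)).map Real.sqrt := by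
    intro M
    rw [Multiset.filter_map, Multiset.map_map]
    have h1 : M.filter (fun x => x ≠ 0)
        = M.filter ((fun y : ℝ => y ≠ 0) ∘ (fun x => x ^ 2)) := by
      apply Multiset.filter_congr; intro x _
      simp [pow_eq_zero_iff]
    rw [← h1]
    apply Multiset.map_congr rfl
    intro x _
    simp [Real.sqrt_sq_eq_abs]
  rw [key, key, h]

lemma main_abs {A B : Matrix m m ℝ} (hA : A.IsHermitian) (hB : B.IsHermitian)
    (h : A * A = B * B) :
    (A.charpoly.roots.filter (fun x => x ≠ 0)).map (fun x => |x|)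
      = (B.charpoly.roots.filter (fun x => x ≠ 0)).map (fun x => |x|) := by
  apply abs_filter_of_sq_eq
  rw [← roots_charpoly_sq hA, ← roots_charpoly_sq hB, h]

end Aux

section Circ
variable (n : ℕ) [NeZero n]

omit [NeZero n] in
lemma circ_hermitian (S : Finset (ZMod n)) (hS : ∀ x ∈ S, -x ∈ S) :
    (circAdj n S).IsHermitian := by
  ext i j
  simp only [circAdj, Matrix.conjTranspose_apply, star_trivial]
  have h2 : i - j ∈ S ↔ j - i ∈ S := by
    constructor
    · intro h; have := hS _ h; rwa [neg_sub] at this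
    · intro h; have := hS _ h; rwa [neg_sub] at this
  by_cases h : j - i ∈ S
  · rw [if_pos (h2.2 h), if_pos h]
  · rw [if_neg (fun hc => h (h2.1 hc)), if_neg h]

lemma circ_shift_mul (S : Finset (ZMod n)) (c : ZMod n) :
    circAdj n S * circAdj n {c} = circAdj n (S.image (fun x => x + c)) := by
  ext i j
  simp only [Matrix.mul_apply, circAdj, Finset.mem_singleton]
  have hiff : ∀ l : ZMod n, j - l = c ↔ l = j - c := by
    intro l
    constructor
    · intro h; rw [← h]; ring
    · intro h; rw [h]; ring
  have h1 : ∀ l : ZMod n, (if l - i ∈ S then (1:ℝ) else 0) * (if j - l = c then 1 else 0)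
      = if l = j - c then (if l - i ∈ S then (1:ℝ) else 0) else 0 := by
    intro l
    by_cases h : l = j - c
    · have h' : j - l = c := (hiff l).mpr h
      simp [h, h']
    · have h' : j - l ≠ c := fun hc => h ((hiff l).mp hc)
      simp [h, h']
  rw [Finset.sum_congr rfl (fun l _ => h1 l), Finset.sum_ite_eq' Finset.univ (j - c)]
  simp only [Finset.mem_univ, if_true]
  have hmem : (j - c) - i ∈ S ↔ j - i ∈ S.image (fun x => x + c) := by
    rw [Finset.mem_image]
    constructor
    · intro h; exact ⟨j - c - i, h, by ring⟩
    · rintro ⟨x, hx, hxe⟩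
      have hx2 : x = j - i - c := by rw [← hxe]; ring
      have h3 : j - c - i = x := by rw [hx2]; ring
      rwa [h3]
  by_cases h : (j - c) - i ∈ S
  · rw [if_pos h, if_pos (hmem.1 h)]
  · rw [if_neg h, if_neg (fun hc => h (hmem.2 hc))]

lemma circ_mul_shift (S : Finset (ZMod n)) (c : ZMod n) :
    circAdj n {c} * circAdj n S = circAdj n (S.image (fun x => x + c)) := by
  ext i j
  simp only [Matrix.mul_apply, circAdj, Finset.mem_singleton]
  have hiff : ∀ l : ZMod n, l - i = c ↔ l = i + c := by
    intro l
    constructor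
    · intro h; rw [← h]; ring
    · intro h; rw [h]; ring
  have h1 : ∀ l : ZMod n, (if l - i = c then (1:ℝ) else 0) * (if j - l ∈ S then 1 else 0)
      = if l = i + c then (if j - l ∈ S then (1:ℝ) else 0) else 0 := by
    intro l
    by_cases h : l = i + c
    · have h' : l - i = c := (hiff l).mpr h
      simp [h, h']
    · have h' : l - i ≠ c := fun hc => h ((hiff l).mp hc)
      simp [h, h']
  rw [Finset.sum_congr rfl (fun l _ => h1 l), Finset.sum_ite_eq' Finset.univ (i + c)]
  simp only [Finset.mem_univ, if_true]
  have hmem : j - (i + c) ∈ S ↔ j - i ∈ S.image (fun x => x + c) := by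
    rw [Finset.mem_image]
    constructor
    · intro h; exact ⟨j - (i + c), h, by ring⟩
    · rintro ⟨x, hx, hxe⟩
      have hx2 : x = j - i - c := by rw [← hxe]; ring
      have h3 : j - (i + c) = x := by rw [hx2]; ring
      rwa [h3]
  by_cases h : j - (i + c) ∈ S
  · rw [if_pos h, if_pos (hmem.1 h)]
  · rw [if_neg h, if_neg (fun hc => h (hmem.2 hc))]

omit [NeZero n] in
lemma circ_zero : circAdj n {(0 : ZMod n)} = 1 := by
  ext i j
  simp only [circAdj, Finset.mem_singleton, sub_eq_zero, Matrix.one_apply]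
  by_cases h : i = j <;> simp [h, eq_comm]

end Circ

theorem stmt0 (k s n : ℕ) [NeZero n] (hk : 2 ≤ k) (hs : 1 ≤ s) (hn : n = 2 * k)
    (a : Fin s → ℕ) (ha : StrictMono a) (hbound : ∀ i, 1 ≤ a i ∧ a i ≤ k - 1)
    (b : Fin s → ℕ) (hb : ∀ i : Fin s, b i = k - a ⟨s - 1 - i, by omega⟩)
    (S1 S2 : Finset (ZMod n))
    (hS1 : S1 = (Finset.univ.image fun i : Fin s => ((a i : ℕ) : ZMod n)) ∪
                (Finset.univ.image fun i : Fin s => (((n - a i : ℕ)) : ZMod n)))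
    (hS2 : S2 = (Finset.univ.image fun i : Fin s => ((b i : ℕ) : ZMod n)) ∪
                (Finset.univ.image fun i : Fin s => (((n - b i : ℕ)) : ZMod n))) :
    absNonzeroSpectrum n S1 = absNonzeroSpectrum n S2 := by
  set c : ZMod n := ((k : ℕ) : ZMod n) with hc
  have hcc : c + c = 0 := by
    rw [hc, ← Nat.cast_add]
    have hkk : k + k = n := by omega
    rw [hkk, ZMod.natCast_self]
  have hnegc : -c = c := neg_eq_of_add_eq_zero_left hcc
  set rev : Fin s → Fin s := (fun i => ⟨s - 1 - i, by omega⟩) with hrev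
  have hrevrev : ∀ i, rev (rev i) = i := by
    intro i
    apply Fin.ext
    simp only [hrev]
    omega
  have himgrev : ∀ g : Fin s → ZMod n,
      Finset.univ.image (fun i => g (rev i)) = Finset.univ.image g := by
    intro g; ext y
    simp only [Finset.mem_image, Finset.mem_univ, true_and]
    constructor
    · rintro ⟨i, hi⟩; exact ⟨rev i, hi⟩
    · rintro ⟨i, hi⟩; exact ⟨rev i, by rw [hrevrev]; exact hi⟩
  have hak : ∀ i, a i ≤ k := fun i => by have := (hbound i).2; omega
  have hbk : ∀ i, b i ≤ k := fun i => by rw [hb i]; omega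
  have hbrev : ∀ i : Fin s, b i = k - a (rev i) := fun i => hb i
  have hcast1 : ∀ i : Fin s, ((n - a i : ℕ) : ZMod n) = -((a i : ℕ) : ZMod n) := by
    intro i
    have h : a i ≤ n := by have := hak i; omega
    rw [Nat.cast_sub h, ZMod.natCast_self, zero_sub]
  have hcast2 : ∀ i : Fin s, ((b i : ℕ) : ZMod n) = -((a (rev i) : ℕ) : ZMod n) + c := by
    intro i
    rw [hbrev i, Nat.cast_sub (hak _), hc]
    ring
  have hcast3 : ∀ i : Fin s, ((n - b i : ℕ) : ZMod n) = ((a (rev i) : ℕ) : ZMod n) + c := by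
    intro i
    have h : b i ≤ n := by have := hbk i; omega
    rw [Nat.cast_sub h, ZMod.natCast_self, zero_sub, hcast2 i]
    have e : -(-((a (rev i) : ℕ) : ZMod n) + c) = ((a (rev i) : ℕ) : ZMod n) - c := by ring
    rw [e, sub_eq_add_neg, hnegc]
  -- S2 is the translate of S1 by c
  have himg : S2 = S1.image (fun x => x + c) := by
    rw [hS1, hS2, Finset.image_union, Finset.image_image, Finset.image_image]
    have e1 : (Finset.univ.image fun i : Fin s => ((b i : ℕ) : ZMod n))
        = Finset.univ.image ((fun x => x + c) ∘ fun i : Fin s => ((n - a i : ℕ) : ZMod n)) := by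
      have r1 : (Finset.univ.image fun i : Fin s => ((b i : ℕ) : ZMod n))
          = Finset.univ.image (fun i : Fin s => -((a (rev i) : ℕ) : ZMod n) + c) := by
        simp only [hcast2]
      rw [r1, himgrev (fun i => -((a i : ℕ) : ZMod n) + c)]
      apply Finset.image_congr
      intro i _
      simp only [Function.comp_apply, hcast1]
    have e2 : (Finset.univ.image fun i : Fin s => ((n - b i : ℕ) : ZMod n))
        = Finset.univ.image ((fun x => x + c) ∘ fun i : Fin s => ((a i : ℕ) : ZMod n)) := by
      have r1 : (Finset.univ.image fun i : Fin s => ((n - b i : ℕ) : ZMod n))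
          = Finset.univ.image (fun i : Fin s => ((a (rev i) : ℕ) : ZMod n) + c) := by
        simp only [hcast3]
      rw [r1, himgrev (fun i => ((a i : ℕ) : ZMod n) + c)]
      rfl
    rw [e1, e2, Finset.union_comm]
  have hsym1 : ∀ x ∈ S1, -x ∈ S1 := by
    intro x hx
    simp only [hS1, Finset.mem_union, Finset.mem_image, Finset.mem_univ, true_and,
      hcast1] at hx ⊢
    rcases hx with ⟨i, hi⟩ | ⟨i, hi⟩
    · right; exact ⟨i, by rw [hi]⟩
    · left; exact ⟨i, by rw [← hi, neg_neg]⟩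
  have hsym2 : ∀ x ∈ S2, -x ∈ S2 := by
    intro x hx
    rw [himg] at hx ⊢
    simp only [Finset.mem_image] at hx ⊢
    obtain ⟨y, hy, rfl⟩ := hx
    refine ⟨-y, hsym1 y hy, ?_⟩
    rw [neg_add, hnegc]
  -- matrix identities
  have hA2 : circAdj n S2 = circAdj n S1 * circAdj n {c} := by
    rw [circ_shift_mul, ← himg]
  have hPA : circAdj n {c} * circAdj n S1 = circAdj n S1 * circAdj n {c} := by
    rw [circ_mul_shift, circ_shift_mul]
  have hPP : circAdj n {c} * circAdj n {c} = 1 := by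
    rw [circ_mul_shift, Finset.image_singleton, hcc, circ_zero]
  have hsq : circAdj n S1 * circAdj n S1 = circAdj n S2 * circAdj n S2 := by
    rw [hA2]
    calc circAdj n S1 * circAdj n S1
        = circAdj n S1 * circAdj n S1 * (circAdj n {c} * circAdj n {c}) := by
          rw [hPP, mul_one]
      _ = circAdj n S1 * (circAdj n {c} * circAdj n S1) * circAdj n {c} := by
          rw [hPA]; noncomm_ring
      _ = (circAdj n S1 * circAdj n {c}) * (circAdj n S1 * circAdj n {c}) := by
          noncomm_ring
  have h1 := circ_hermitian n S1 hsym1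
  have h2 := circ_hermitian n S2 hsym2
  unfold absNonzeroSpectrum circSpectrum
  exact main_abs h1 h2 hsq
end

section
/- Let a_1 ≤ a_s be integers with a_1 ≥ 1. Then for every real θ, 2·Σ_{h=a_1}^{a_s} cos(hθ) = U_{2a_s}(cos(θ/2)) − U_{2(a_1−1)}(cos(θ/2)). In particular, for a circulant graph G(ℤ_n, S) with S = {a_1, a_1+1,…,a_s, n−a_s,…,n−a_1−1, n−a_1} a set of consecutive connection values, its eigenvalues satisfy λ_j = U_{2a_s}(cos(jπ/n)) − U_{2(a_1−1)}(cos(jπ/n)) for 0 ≤ j ≤ n−1, where λ_j = 2·Σ_{h=a_1}^{a_s} cos(2πjh/n). -/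
open Polynomial Real

lemma U_sub_U_aux (n : ℤ) :
    Chebyshev.U ℝ n - Chebyshev.U ℝ (n - 2) = 2 * Chebyshev.T ℝ n := by
  nth_rewrite 1 [Chebyshev.U_eq ℝ n]
  rw [Chebyshev.T_eq_U_sub_X_mul_U, Chebyshev.U_eq ℝ n]
  ring

lemma dirichlet_aux (a : ℕ) (θ : ℝ) :
    (Chebyshev.U ℝ (2 * (a : ℤ))).eval (Real.cos (θ / 2)) =
      1 + 2 * ∑ h ∈ Finset.Icc 1 a, Real.cos (h * θ) := by
  induction a with
  | zero => simp [Chebyshev.U_zero]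
  | succ a ih =>
    have key := U_sub_U_aux (2 * ((a : ℤ) + 1))
    have h2 : 2 * ((a : ℤ) + 1) - 2 = 2 * (a : ℤ) := by ring
    rw [h2] at key
    have := congrArg (Polynomial.eval (Real.cos (θ / 2))) key
    simp only [Polynomial.eval_sub, Polynomial.eval_mul, Polynomial.eval_ofNat] at this
    have hT : (Chebyshev.T ℝ (2 * ((a : ℤ) + 1))).eval (Real.cos (θ / 2)) =
        Real.cos ((a + 1 : ℕ) * θ) := by
      rw [Chebyshev.T_real_cos]
      push_cast
      ring_nf
    have hsum : ∑ h ∈ Finset.Icc 1 (a + 1), Real.cos (h * θ) =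
        (∑ h ∈ Finset.Icc 1 a, Real.cos (h * θ)) + Real.cos ((a + 1 : ℕ) * θ) := by
      rw [Finset.sum_Icc_succ_top (by omega)]
    have hcast : ((a + 1 : ℕ) : ℤ) = (a : ℤ) + 1 := by push_cast; ring
    rw [hcast]
    have : (Chebyshev.U ℝ (2 * ((a : ℤ) + 1))).eval (Real.cos (θ / 2)) =
        (Chebyshev.U ℝ (2 * (a : ℤ))).eval (Real.cos (θ / 2)) +
          2 * (Chebyshev.T ℝ (2 * ((a : ℤ) + 1))).eval (Real.cos (θ / 2)) := by
      linarith [this]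
    rw [this, hT, ih, hsum]
    ring

theorem stmt4 (a₁ aₛ : ℕ) (h1 : 1 ≤ a₁) (h : a₁ ≤ aₛ) :
    (∀ θ : ℝ,
      2 * ∑ h ∈ Finset.Icc a₁ aₛ, Real.cos (h * θ) =
        (Chebyshev.U ℝ (2 * (aₛ : ℤ))).eval (Real.cos (θ / 2)) -
          (Chebyshev.U ℝ (2 * ((a₁ : ℤ) - 1))).eval (Real.cos (θ / 2))) ∧
    (∀ n : ℕ, 0 < n → ∀ j : ℕ, j ≤ n - 1 →
      2 * ∑ h ∈ Finset.Icc a₁ aₛ, Real.cos (2 * π * j * h / n) =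
        (Chebyshev.U ℝ (2 * (aₛ : ℤ))).eval (Real.cos (j * π / n)) -
          (Chebyshev.U ℝ (2 * ((a₁ : ℤ) - 1))).eval (Real.cos (j * π / n))) := by
  have main : ∀ θ : ℝ,
      2 * ∑ h ∈ Finset.Icc a₁ aₛ, Real.cos (h * θ) =
        (Chebyshev.U ℝ (2 * (aₛ : ℤ))).eval (Real.cos (θ / 2)) -
          (Chebyshev.U ℝ (2 * ((a₁ : ℤ) - 1))).eval (Real.cos (θ / 2)) := by
    intro θ
    have hc : 2 * ((a₁ : ℤ) - 1) = 2 * ((a₁ - 1 : ℕ) : ℤ) := by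
      have : ((a₁ - 1 : ℕ) : ℤ) = (a₁ : ℤ) - 1 := by omega
      rw [this]
    rw [hc, dirichlet_aux aₛ θ, dirichlet_aux (a₁ - 1) θ]
    have hsplit : ∑ h ∈ Finset.Icc 1 aₛ, Real.cos (h * θ) =
        (∑ h ∈ Finset.Icc 1 (a₁ - 1), Real.cos (h * θ)) +
          ∑ h ∈ Finset.Icc a₁ aₛ, Real.cos (h * θ) := by
      rw [← Finset.sum_union]
      · congr 1
        ext x
        simp only [Finset.mem_union, Finset.mem_Icc]
        omega
      · rw [Finset.disjoint_left]
        intro x hx hx'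
        simp only [Finset.mem_Icc] at hx hx'
        omega
    rw [hsplit]
    ring
  refine ⟨main, fun n hn j hj => ?_⟩
  have := main (2 * π * j / n)
  have harg : ∀ h : ℕ, (h : ℝ) * (2 * π * j / n) = 2 * π * j * h / n := by
    intro h; ring
  have harg2 : 2 * π * j / n / 2 = j * π / n := by ring
  simp only [harg, harg2] at this
  exact this
end

section
/- Let n = 2k with k ≥ 6, and let S1 = {1, 2, 2k−2, 2k−1} and S2 = {k−2, k−1, k+1, k+2}. Then the circulant graphs G(ℤ_n, S1) and G(ℤ_n, S2) have different inertias; in particular, the adjacency matrices of G(ℤ_n, S1) and G(ℤ_n, S2) have different numbers of positive eigenvalues (counted with multiplicity). -/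
open Polynomial

/-!
The discrete Fourier transform diagonalises circulant matrices, so for symmetric `S` the
eigenvalues of `G(ℤ_n, S)` are `λ_m = ∑_{s ∈ S} cos (2π m s / n)`, `0 ≤ m < n`. For `n = 2k` and
`θ = π m / k`, `S₁` gives `λ_m = 2 cos θ + 2 cos 2θ = 2 (2 cos θ - 1)(cos θ + 1)`, and since
`k θ = π m`, `S₂` gives `(-1)^m` times the same value. So the two graphs share their positive
eigenvalues at even `m`, while at odd `m` the first has one whenever `cos θ > 1/2` (about `k / 3`
times) and the second one whenever `-1 < cos θ < 1/2` (about `2k / 3` times).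
-/

open Finset Real ZMod Matrix

lemma Polynomial.roots_prod_X_sub_C_eq_map {R ι : Type*} [CommRing R] [IsDomain R]
    (s : Finset ι) (f : ι → R) : (∏ i ∈ s, (X - C (f i))).roots = s.val.map f := by
  simpa [Multiset.map_map] using roots_multiset_prod_X_sub_C (s.val.map f)

namespace ZMod

lemma natCast_sub_self {n a : ℕ} (h : a ≤ n) : ((n - a : ℕ) : ZMod n) = -(a : ZMod n) := by
  rw [Nat.cast_sub h, natCast_self, zero_sub]

lemma natCast_ne_natCast {n a b : ℕ} (ha : a < n) (hb : b < n) (hab : a ≠ b) :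
    (a : ZMod n) ≠ b := by
  rwa [Ne, natCast_eq_natCast_iff', Nat.mod_eq_of_lt ha, Nat.mod_eq_of_lt hb]

variable {N : ℕ} [NeZero N]

lemma prod_eq_prod_range {M : Type*} [CommMonoid M] (f : ZMod N → M) :
    ∏ k, f k = ∏ m ∈ range N, f m := by
  symm
  exact prod_nbij' (fun m ↦ (m : ZMod N)) val (fun _ _ ↦ mem_univ _)
    (fun k _ ↦ mem_range.mpr k.val_lt) (fun m hm ↦ val_natCast_of_lt (mem_range.mp hm))
    (fun k _ ↦ natCast_zmod_val k) (fun _ _ ↦ rfl)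

lemma dft_comp_add_right {E : Type*} [AddCommGroup E] [Module ℂ E] (Φ : ZMod N → E)
    (s k : ZMod N) : 𝓕 (fun j ↦ Φ (j + s)) k = stdAddChar (s * k) • 𝓕 Φ k := by
  simp only [dft_apply, smul_sum, smul_smul, ← AddChar.map_add_eq_mul]
  refine Fintype.sum_equiv (Equiv.addRight s) _ _ fun j ↦ ?_
  simp only [Equiv.coe_addRight]
  ring_nf

lemma re_stdAddChar_mul_natCast (s : ZMod N) (m : ℕ) :
    (stdAddChar (s * (m : ZMod N))).re = cos (2 * π * m * s.val / N) := by
  rw [mul_comm, ← nsmul_eq_mul, AddChar.map_nsmul_eq_pow, stdAddChar_apply, toCircle_apply,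
    ← Complex.exp_nat_mul]
  convert Complex.exp_ofReal_mul_I_re (2 * π * m * s.val / N) using 3
  push_cast
  ring

end ZMod

section Circulant

variable {n : ℕ} [NeZero n] (S : Finset (ZMod n))

lemma circAdj_map_mulVec (Φ : ZMod n → ℂ) :
    (circAdj n S).map Complex.ofRealHom *ᵥ Φ = ∑ s ∈ S, fun i ↦ Φ (i + s) := by
  ext i
  simp only [mulVec, dotProduct, map_apply, circAdj, Finset.sum_apply]
  rw [← Fintype.sum_equiv (Equiv.addLeft i) (fun s ↦ if s ∈ S then Φ (i + s) else 0) _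
    (fun s ↦ by simp only [Equiv.coe_addLeft, add_sub_cancel_left]; split_ifs <;> simp),
    sum_ite_mem, univ_inter]

lemma dft_circAdj_map_mulVec (Φ : ZMod n → ℂ) :
    𝓕 ((circAdj n S).map Complex.ofRealHom *ᵥ Φ) =
      diagonal (fun k ↦ ∑ s ∈ S, stdAddChar (s * k)) *ᵥ 𝓕 Φ := by
  ext k
  rw [circAdj_map_mulVec, map_sum, mulVec_diagonal, Finset.sum_apply, sum_mul]
  exact sum_congr rfl fun s _ ↦ dft_comp_add_right Φ s k

lemma charpoly_circAdj_map :
    ((circAdj n S).map Complex.ofRealHom).charpoly =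
      ∏ k, (X - C (∑ s ∈ S, stdAddChar (s * k))) := by
  have hconj : (dft (N := n) (E := ℂ)).conj (toLin' ((circAdj n S).map Complex.ofRealHom)) =
      toLin' (diagonal fun k ↦ ∑ s ∈ S, stdAddChar (s * k)) := by
    refine LinearMap.ext fun Ψ ↦ ?_
    obtain ⟨Φ, rfl⟩ := dft.surjective Ψ
    simp [LinearEquiv.conj_apply, dft_circAdj_map_mulVec]
  rw [← charpoly_toLin', ← LinearEquiv.charpoly_conj dft, hconj, charpoly_toLin',
    charpoly_diagonal]

variable {S}

lemma sum_stdAddChar_eq_ofReal (hS : ∀ s ∈ S, -s ∈ S) (m : ℕ) :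
    ∑ s ∈ S, stdAddChar (s * (m : ZMod n)) =
      ((∑ s ∈ S, cos (2 * π * m * s.val / n) : ℝ) : ℂ) := by
  have hconj : starRingEnd ℂ (∑ s ∈ S, stdAddChar (s * (m : ZMod n))) =
      ∑ s ∈ S, stdAddChar (s * (m : ZMod n)) := by
    rw [map_sum]
    exact sum_nbij' Neg.neg Neg.neg hS hS (fun s _ ↦ neg_neg s) (fun s _ ↦ neg_neg s)
      fun s _ ↦ by rw [← AddChar.map_neg_eq_conj, neg_mul]
  rw [← RCLike.conj_eq_iff_re.mp hconj]
  simp [re_stdAddChar_mul_natCast]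

theorem circSpectrum_eq (hS : ∀ s ∈ S, -s ∈ S) :
    circSpectrum n S =
      (Multiset.range n).map fun m : ℕ ↦ ∑ s ∈ S, cos (2 * π * m * s.val / n) := by
  have hcharpoly : (circAdj n S).charpoly =
      ∏ m ∈ range n, (X - C (∑ s ∈ S, cos (2 * π * m * s.val / n))) := by
    refine map_injective Complex.ofRealHom Complex.ofReal_injective ?_
    rw [← charpoly_map, charpoly_circAdj_map, Polynomial.map_prod, prod_eq_prod_range]
    refine prod_congr rfl fun m _ ↦ ?_
    rw [Polynomial.map_sub, map_X, map_C, Complex.ofRealHom_eq_coe, sum_stdAddChar_eq_ofReal hS]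
  rw [circSpectrum, hcharpoly, roots_prod_X_sub_C_eq_map, range_val]

end Circulant

def symmPairs (n a b : ℕ) : Finset (ZMod n) :=
  {(a : ZMod n), (b : ZMod n), ((n - b : ℕ) : ZMod n), ((n - a : ℕ) : ZMod n)}

section SymmPairs

variable {n a b : ℕ}

lemma neg_mem_symmPairs (ha : a ≤ n) (hb : b ≤ n) :
    ∀ s ∈ symmPairs n a b, -s ∈ symmPairs n a b := by
  simp only [symmPairs, natCast_sub_self ha, natCast_sub_self hb, mem_insert, mem_singleton]
  rintro s (rfl | rfl | rfl | rfl) <;> simp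

lemma sum_symmPairs_cos [NeZero n] (ha : 0 < a) (hab : a < b) (hbn : 2 * b < n) (m : ℕ) :
    ∑ s ∈ symmPairs n a b, cos (2 * π * m * s.val / n) =
      2 * cos (2 * π * m * a / n) + 2 * cos (2 * π * m * b / n) := by
  have hcos : ∀ x ≤ n, cos (2 * π * m * (n - x : ℕ) / n) = cos (2 * π * m * x / n) := by
    intro x hx
    have hn : (n : ℝ) ≠ 0 := NeZero.ne _
    rw [← cos_nat_mul_two_pi_sub _ m, Nat.cast_sub hx]
    congr 1
    field_simp
    ring
  rw [symmPairs, sum_insert, sum_insert, sum_insert, sum_singleton]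
  · simp only [val_natCast_of_lt (by omega : a < n), val_natCast_of_lt (by omega : b < n),
      val_natCast_of_lt (by omega : n - a < n), val_natCast_of_lt (by omega : n - b < n),
      hcos a (by omega), hcos b (by omega)]
    ring
  all_goals
    simp only [mem_insert, mem_singleton, not_or]
    and_intros <;> exact natCast_ne_natCast (by omega) (by omega) (by omega)

end SymmPairs

noncomputable def cycleSqEigenvalue (θ : ℝ) : ℝ := 2 * cos θ + 2 * cos (2 * θ)

section Spectra

variable {k : ℕ} [NeZero (2 * k)]

theorem circSpectrum_symmPairs_one_two (hk : 2 < k) :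
    circSpectrum (2 * k) (symmPairs (2 * k) 1 2) =
      (Multiset.range (2 * k)).map fun m : ℕ ↦ cycleSqEigenvalue (π * m / k) := by
  rw [circSpectrum_eq (neg_mem_symmPairs (by omega) (by omega))]
  refine Multiset.map_congr rfl fun m _ ↦ ?_
  have hk' : (k : ℝ) ≠ 0 := by positivity
  rw [sum_symmPairs_cos (by norm_num) (by norm_num) (by omega), cycleSqEigenvalue]
  congr 2 <;> · push_cast; field_simp

theorem circSpectrum_symmPairs_sub_two_sub_one (hk : 2 < k) :
    circSpectrum (2 * k) (symmPairs (2 * k) (k - 2) (k - 1)) =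
      (Multiset.range (2 * k)).map fun m : ℕ ↦ (-1) ^ m * cycleSqEigenvalue (π * m / k) := by
  rw [circSpectrum_eq (neg_mem_symmPairs (by omega) (by omega))]
  refine Multiset.map_congr rfl fun m _ ↦ ?_
  have hk' : (k : ℝ) ≠ 0 := by positivity
  -- `k θ = π m` turns the angle `(k - j) θ` into `π m - j θ`
  have hangle : ∀ j ≤ k, 2 * π * m * ((k - j : ℕ) : ℝ) / ((2 * k : ℕ) : ℝ) =
      m * π - j * (π * m / k) := by
    intro j hj
    push_cast [Nat.cast_sub hj]
    field_simp
  rw [sum_symmPairs_cos (by omega) (by omega) (by omega), hangle 2 (by omega),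
    hangle 1 (by omega), cos_nat_mul_pi_sub, cos_nat_mul_pi_sub, cycleSqEigenvalue]
  rw [Nat.cast_ofNat, Nat.cast_one, one_mul]
  ring

end Spectra

section Signs

lemma pi_mul_div_lt_pi_mul_div_iff {a b c d : ℕ} (hb : 0 < b) (hd : 0 < d) :
    π * a / b < π * c / d ↔ a * d < c * b := by
  rw [div_lt_div_iff₀ (by positivity) (by positivity), mul_assoc, mul_assoc,
    mul_lt_mul_iff_right₀ pi_pos]
  exact_mod_cast Iff.rfl

variable {k m : ℕ}

lemma cos_pi_mul_div_classify_of_le (hk : 0 < k) (hm : m ≤ k) :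
    (1 / 2 < cos (π * m / k) ↔ 3 * m < k) ∧ (cos (π * m / k) < 1 / 2 ↔ k < 3 * m) ∧
      (-1 < cos (π * m / k) ↔ m < k) := by
  have mem : ∀ {a b : ℕ}, 0 < b → a ≤ b → π * a / b ∈ Set.Icc 0 π := fun hb hab ↦
    ⟨by positivity, by
      rw [div_le_iff₀ (by positivity)]
      exact mul_le_mul_of_nonneg_left (by exact_mod_cast hab) pi_pos.le⟩
  have hθ := mem hk hm
  have hthird := mem (a := 1) (b := 3) (by norm_num) (by norm_num)
  have hpi := mem (a := 1) (b := 1) (by norm_num) le_rfl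
  have cos_third : cos (π * (1 : ℕ) / (3 : ℕ)) = 1 / 2 := by
    rw [← cos_pi_div_three]
    push_cast
    ring_nf
  have cos_one : cos (π * (1 : ℕ) / (1 : ℕ)) = -1 := by simp
  refine ⟨?_, ?_, ?_⟩
  · rw [← cos_third, strictAntiOn_cos.lt_iff_gt hthird hθ,
      pi_mul_div_lt_pi_mul_div_iff hk (by norm_num)]
    omega
  · rw [← cos_third, strictAntiOn_cos.lt_iff_gt hθ hthird,
      pi_mul_div_lt_pi_mul_div_iff (by norm_num) hk]
    omega
  · rw [← cos_one, strictAntiOn_cos.lt_iff_gt hpi hθ,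
      pi_mul_div_lt_pi_mul_div_iff hk (by norm_num)]
    omega

lemma cos_pi_mul_div_eq_cos_two_mul_sub (hk : 0 < k) (hm : m ≤ 2 * k) :
    cos (π * m / k) = cos (π * (2 * k - m : ℕ) / k) := by
  have hk' : (k : ℝ) ≠ 0 := by positivity
  rw [← cos_nat_mul_two_pi_sub _ 1, Nat.cast_sub hm]
  congr 1
  field_simp
  push_cast
  ring

lemma cos_pi_mul_div_classify (hk : 0 < k) (hm : m < 2 * k) :
    (1 / 2 < cos (π * m / k) ↔ 3 * m < k ∨ 5 * k < 3 * m) ∧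
      (cos (π * m / k) < 1 / 2 ↔ k < 3 * m ∧ 3 * m < 5 * k) ∧
      (-1 < cos (π * m / k) ↔ m ≠ k) := by
  rcases le_or_gt m k with hmk | hmk
  · obtain ⟨h₁, h₂, h₃⟩ := cos_pi_mul_div_classify_of_le hk hmk
    rw [h₁, h₂, h₃]
    omega
  · obtain ⟨h₁, h₂, h₃⟩ := cos_pi_mul_div_classify_of_le hk (m := 2 * k - m) (by omega)
    rw [cos_pi_mul_div_eq_cos_two_mul_sub hk hm.le, h₁, h₂, h₃]
    omega

lemma cycleSqEigenvalue_eq (θ : ℝ) :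
    cycleSqEigenvalue θ = 2 * (2 * cos θ - 1) * (cos θ + 1) := by
  rw [cycleSqEigenvalue, cos_two_mul]
  ring

lemma cycleSqEigenvalue_pos_iff (hk : 0 < k) (hm : m < 2 * k) :
    0 < cycleSqEigenvalue (π * m / k) ↔ 3 * m < k ∨ 5 * k < 3 * m := by
  obtain ⟨h₁, -, -⟩ := cos_pi_mul_div_classify hk hm
  rw [cycleSqEigenvalue_eq, ← h₁]
  have := neg_one_le_cos (π * m / k)
  constructor <;> intro h <;> nlinarith

lemma cycleSqEigenvalue_neg_iff (hk : 0 < k) (hm : m < 2 * k) :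
    cycleSqEigenvalue (π * m / k) < 0 ↔ k < 3 * m ∧ 3 * m < 5 * k ∧ m ≠ k := by
  obtain ⟨-, h₂, h₃⟩ := cos_pi_mul_div_classify hk hm
  rw [cycleSqEigenvalue_eq, ← and_assoc, ← h₂, ← h₃]
  have := neg_one_le_cos (π * m / k)
  constructor
  · intro h
    constructor <;> nlinarith
  · rintro ⟨h, h'⟩
    nlinarith

lemma neg_one_pow_mul_pos_iff (x : ℝ) :
    0 < (-1) ^ m * x ↔ Even m ∧ 0 < x ∨ Odd m ∧ x < 0 := by
  rcases Nat.even_or_odd m with h | h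
  · simp [h.neg_one_pow, h, Nat.not_odd_iff_even.mpr h]
  · simp [h.neg_one_pow, h, Nat.not_even_iff_odd.mpr h]

end Signs

section Counting

lemma card_filter_map_range (n : ℕ) (f : ℕ → ℝ) (p : ℝ → Prop) [DecidablePred p] :
    Multiset.card (((Multiset.range n).map f).filter p) = #{m ∈ range n | p (f m)} := by
  rw [Multiset.filter_map, Multiset.card_map, ← range_val, ← filter_val, card_val]
  rfl

lemma card_filter_odd_range_two_mul (k : ℕ) (p : ℕ → Prop) [DecidablePred p] :
    #{m ∈ range (2 * k) | Odd m ∧ p m} = #{i ∈ range k | p (2 * i + 1)} := by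
  rw [← card_image_of_injective {i ∈ range k | p (2 * i + 1)}
    (fun a b (h : 2 * a + 1 = 2 * b + 1) ↦ by omega)]
  congr 1
  ext m
  simp only [mem_filter, mem_range, mem_image, Nat.odd_iff]
  constructor
  · rintro ⟨hm, hodd, hp⟩
    exact ⟨m / 2, ⟨by omega, by rwa [show 2 * (m / 2) + 1 = m by omega]⟩, by omega⟩
  · rintro ⟨i, ⟨hi, hp⟩, rfl⟩
    exact ⟨by omega, by omega, hp⟩

lemma card_filter_even_and_or_odd_and (s : Finset ℕ) (p q : ℕ → Prop) [DecidablePred p]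
    [DecidablePred q] :
    #{m ∈ s | Even m ∧ p m ∨ Odd m ∧ q m} = #{m ∈ s | Even m ∧ p m} + #{m ∈ s | Odd m ∧ q m} := by
  rw [filter_or, card_union_of_disjoint]
  exact disjoint_filter.mpr fun m _ h₁ h₂ ↦ Nat.not_even_iff_odd.mpr h₂.1 h₁.1

lemma card_odd_outer_le (k : ℕ) :
    #{m ∈ range (2 * k) | Odd m ∧ (3 * m < k ∨ 5 * k < 3 * m)} ≤
      (k + 2) / 6 + (k - (5 * k + 3) / 6) := by
  rw [card_filter_odd_range_two_mul, ← card_range ((k + 2) / 6), ← Nat.card_Ico]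
  refine (card_le_card fun i ↦ ?_).trans (card_union_le _ _)
  simp only [mem_filter, mem_range, mem_union, mem_Ico]
  omega

lemma le_card_odd_inner (k : ℕ) :
    (5 * k + 2) / 6 - (k + 3) / 6 - 1 ≤
      #{m ∈ range (2 * k) | Odd m ∧ (k < 3 * m ∧ 3 * m < 5 * k ∧ m ≠ k)} := by
  rw [card_filter_odd_range_two_mul, ← Nat.card_Ico ((k + 3) / 6)]
  refine (pred_card_le_card_erase (a := (k - 1) / 2)).trans (card_le_card fun i ↦ ?_)
  simp only [mem_filter, mem_range, mem_erase, mem_Ico]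
  omega

lemma card_outer_ne_card_alternating (k : ℕ) (hk : 6 ≤ k) :
    #{m ∈ range (2 * k) | 3 * m < k ∨ 5 * k < 3 * m} ≠
      #{m ∈ range (2 * k) | Even m ∧ (3 * m < k ∨ 5 * k < 3 * m) ∨
        Odd m ∧ (k < 3 * m ∧ 3 * m < 5 * k ∧ m ≠ k)} := by
  have hparity : ∀ m, (3 * m < k ∨ 5 * k < 3 * m) ↔
      Even m ∧ (3 * m < k ∨ 5 * k < 3 * m) ∨ Odd m ∧ (3 * m < k ∨ 5 * k < 3 * m) := fun m ↦ by
    have := Nat.even_or_odd m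
    tauto
  rw [filter_congr fun m _ ↦ hparity m, card_filter_even_and_or_odd_and,
    card_filter_even_and_or_odd_and]
  have hbounds : (k + 2) / 6 + (k - (5 * k + 3) / 6) < (5 * k + 2) / 6 - (k + 3) / 6 - 1 := by
    obtain ⟨q, r, hr, rfl⟩ : ∃ q r, r < 6 ∧ k = 6 * q + r :=
      ⟨k / 6, k % 6, k.mod_lt (by norm_num), (k.div_add_mod 6).symm⟩
    interval_cases r <;> omega
  have := card_odd_outer_le k
  have := le_card_odd_inner k
  omega

end Counting

theorem stmt6 (k n : ℕ) [NeZero n] (hk : 6 ≤ k) (hn : n = 2 * k)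
    (S1 S2 : Finset (ZMod n))
    (hS1 : S1 = {((1 : ℕ) : ZMod n), ((2 : ℕ) : ZMod n),
                 ((2 * k - 2 : ℕ) : ZMod n), ((2 * k - 1 : ℕ) : ZMod n)})
    (hS2 : S2 = {((k - 2 : ℕ) : ZMod n), ((k - 1 : ℕ) : ZMod n),
                 ((k + 1 : ℕ) : ZMod n), ((k + 2 : ℕ) : ZMod n)}) :
    Multiset.card ((circSpectrum n S1).filter (fun x => 0 < x)) ≠
      Multiset.card ((circSpectrum n S2).filter (fun x => 0 < x)) := by
  subst hn
  have hS1 : S1 = symmPairs (2 * k) 1 2 := hS1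
  have hS2 : S2 = symmPairs (2 * k) (k - 2) (k - 1) := by
    rw [hS2, symmPairs, show 2 * k - (k - 1) = k + 1 by omega,
      show 2 * k - (k - 2) = k + 2 by omega]
  rw [hS1, hS2, circSpectrum_symmPairs_one_two (by omega),
    circSpectrum_symmPairs_sub_two_sub_one (by omega), card_filter_map_range,
    card_filter_map_range]
  convert card_outer_ne_card_alternating k hk using 2 <;>
    refine filter_congr fun m hm ↦ ?_ <;> rw [mem_range] at hm
  · exact cycleSqEigenvalue_pos_iff (by omega) hm
  · rw [neg_one_pow_mul_pos_iff, cycleSqEigenvalue_pos_iff (by omega) hm,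
      cycleSqEigenvalue_neg_iff (by omega) hm]
end

section
/- For every integer k ≥ 6, the number of integers r with 1 ≤ r ≤ k such that either 0 < (2r−1)/k < 1/3 or 5/3 < (2r−1)/k < 2 is strictly less than the number of integers r with 1 ≤ r ≤ k such that either 1/3 < (2r−1)/k < 1 or 1 < (2r−1)/k < 5/3. -/
theorem stmt7 (k : ℕ) (hk : 6 ≤ k) :
    ((Finset.Icc (1 : ℕ) k).filter (fun r : ℕ =>
        (0 < (2 * (r : ℚ) - 1) / k ∧ (2 * (r : ℚ) - 1) / k < 1 / 3) ∨
        (5 / 3 < (2 * (r : ℚ) - 1) / k ∧ (2 * (r : ℚ) - 1) / k < 2))).card <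
    ((Finset.Icc (1 : ℕ) k).filter (fun r : ℕ =>
        (1 / 3 < (2 * (r : ℚ) - 1) / k ∧ (2 * (r : ℚ) - 1) / k < 1) ∨
        (1 < (2 * (r : ℚ) - 1) / k ∧ (2 * (r : ℚ) - 1) / k < 5 / 3))).card := by
  have hk0 : (0:ℚ) < (k:ℚ) := by
    have : 0 < k := by omega
    exact_mod_cast this
  have e1 : ((Finset.Icc (1 : ℕ) k).filter (fun r : ℕ =>
        (0 < (2 * (r : ℚ) - 1) / k ∧ (2 * (r : ℚ) - 1) / k < 1 / 3) ∨
        (5 / 3 < (2 * (r : ℚ) - 1) / k ∧ (2 * (r : ℚ) - 1) / k < 2)))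
      = (Finset.Icc (1 : ℕ) k).filter (fun r : ℕ => 6*r < k+3 ∨ 5*k+3 < 6*r) := by
    apply Finset.filter_congr
    intro r hr
    simp only [Finset.mem_Icc] at hr
    have h1 : (1:ℚ) ≤ (r:ℚ) := by exact_mod_cast hr.1
    have h2 : (r:ℚ) ≤ (k:ℚ) := by exact_mod_cast hr.2
    rw [lt_div_iff₀ hk0, div_lt_div_iff₀ hk0 (by norm_num : (0:ℚ) < 3),
        div_lt_div_iff₀ (by norm_num : (0:ℚ) < 3) hk0, div_lt_iff₀ hk0]
    constructor
    · rintro (⟨_, hb⟩ | ⟨hb, _⟩)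
      · left
        have : (6*r : ℚ) < (k:ℚ) + 3 := by push_cast; linarith
        exact_mod_cast this
      · right
        have : (5*k : ℚ) + 3 < (6*r : ℚ) := by push_cast; linarith
        exact_mod_cast this
    · rintro (h | h)
      · left
        have hq : ((6*r : ℕ) : ℚ) < ((k+3 : ℕ) : ℚ) := by exact_mod_cast h
        push_cast at hq
        constructor <;> linarith
      · right
        have hq : ((5*k+3 : ℕ) : ℚ) < ((6*r : ℕ) : ℚ) := by exact_mod_cast h
        push_cast at hq
        constructor <;> linarith
  have e2 : ((Finset.Icc (1 : ℕ) k).filter (fun r : ℕ =>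
        (1 / 3 < (2 * (r : ℚ) - 1) / k ∧ (2 * (r : ℚ) - 1) / k < 1) ∨
        (1 < (2 * (r : ℚ) - 1) / k ∧ (2 * (r : ℚ) - 1) / k < 5 / 3)))
      = (Finset.Icc (1 : ℕ) k).filter
          (fun r : ℕ => (k+3 < 6*r ∧ 2*r < k+1) ∨ (k+1 < 2*r ∧ 6*r < 5*k+3)) := by
    apply Finset.filter_congr
    intro r hr
    simp only [Finset.mem_Icc] at hr
    have h1 : (1:ℚ) ≤ (r:ℚ) := by exact_mod_cast hr.1
    have h2 : (r:ℚ) ≤ (k:ℚ) := by exact_mod_cast hr.2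
    rw [div_lt_div_iff₀ (by norm_num : (0:ℚ) < 3) hk0, div_lt_iff₀ hk0,
        lt_div_iff₀ hk0, div_lt_div_iff₀ hk0 (by norm_num : (0:ℚ) < 3)]
    constructor
    · rintro (⟨ha, hb⟩ | ⟨ha, hb⟩)
      · left
        have c1 : (k : ℚ) + 3 < (6*r : ℚ) := by push_cast; linarith
        have c2 : (2*r : ℚ) < (k : ℚ) + 1 := by push_cast; linarith
        exact ⟨by exact_mod_cast c1, by exact_mod_cast c2⟩
      · right
        have c1 : (k : ℚ) + 1 < (2*r : ℚ) := by push_cast; linarith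
        have c2 : (6*r : ℚ) < (5*k : ℚ) + 3 := by push_cast; linarith
        exact ⟨by exact_mod_cast c1, by exact_mod_cast c2⟩
    · rintro (⟨ha, hb⟩ | ⟨ha, hb⟩)
      · left
        have c1 : ((k+3 : ℕ) : ℚ) < ((6*r : ℕ) : ℚ) := by exact_mod_cast ha
        have c2 : ((2*r : ℕ) : ℚ) < ((k+1 : ℕ) : ℚ) := by exact_mod_cast hb
        push_cast at c1 c2
        constructor <;> linarith
      · right
        have c1 : ((k+1 : ℕ) : ℚ) < ((2*r : ℕ) : ℚ) := by exact_mod_cast ha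
        have c2 : ((6*r : ℕ) : ℚ) < ((5*k+3 : ℕ) : ℚ) := by exact_mod_cast hb
        push_cast at c1 c2
        constructor <;> linarith
  rw [e1, e2]
  have f1 : (Finset.Icc (1 : ℕ) k).filter (fun r : ℕ => 6*r < k+3 ∨ 5*k+3 < 6*r)
      = Finset.Icc 1 ((k+2)/6) ∪ Finset.Icc ((5*k+9)/6) k := by
    ext r
    simp only [Finset.mem_filter, Finset.mem_Icc, Finset.mem_union]
    omega
  have f2 : (Finset.Icc (1 : ℕ) k).filter
        (fun r : ℕ => (k+3 < 6*r ∧ 2*r < k+1) ∨ (k+1 < 2*r ∧ 6*r < 5*k+3))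
      = Finset.Icc ((k+9)/6) (k/2) ∪ Finset.Icc ((k+3)/2) ((5*k+2)/6) := by
    ext r
    simp only [Finset.mem_filter, Finset.mem_Icc, Finset.mem_union]
    omega
  rw [f1, f2]
  rw [Finset.card_union_of_disjoint, Finset.card_union_of_disjoint]
  · simp only [Nat.card_Icc]
    omega
  · rw [Finset.disjoint_left]
    intro a ha hb
    simp only [Finset.mem_Icc] at ha hb
    omega
  · rw [Finset.disjoint_left]
    intro a ha hb
    simp only [Finset.mem_Icc] at ha hb
    omega
end

section
/- Let n = 2k with k ≥ 6, and let S1 = {1, 2, 2k−2, 2k−1} and S2 = {k−2, k−1, k+1, k+2}. Then the circulant graphs G(ℤ_n, S1) and G(ℤ_n, S2) are singularly cospectral but not cospectral: the multisets of absolute values of the nonzero eigenvalues (with multiplicity) of their adjacency matrices coincide, but the multisets of all eigenvalues (with multiplicity) do not. -/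
open Polynomial

/-! ### Auxiliary spectral-theoretic lemmas -/

section Spectral

variable {m : Type*} [Fintype m] [DecidableEq m]

lemma my_charpoly_diagonal (d : m → ℝ) :
    (Matrix.diagonal d).charpoly = ∏ i, (X - C (d i)) := by
  have h : Matrix.charmatrix (Matrix.diagonal d) = Matrix.diagonal (fun i => X - C (d i)) := by
    ext i j
    by_cases hij : i = j <;>
      simp [Matrix.charmatrix_apply, Matrix.diagonal, hij]
  rw [Matrix.charpoly, h, Matrix.det_diagonal]

lemma my_charpoly_conj_s8 (U M : Matrix m m ℝ) (hU : U ∈ Matrix.unitaryGroup m ℝ) :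
    (U * M * star U).charpoly = M.charpoly := by
  have h1 : star U * U = 1 := Matrix.UnitaryGroup.star_mul_self ⟨U, hU⟩
  have h2 : U * star U = 1 := (Matrix.mem_unitaryGroup_iff (n := m) (α := ℝ)).mp hU
  set C' : Matrix m m ℝ →+* Matrix m m ℝ[X] := (C : ℝ →+* ℝ[X]).mapMatrix with hC'
  have hcm : Matrix.charmatrix (U * M * star U) = C' U * Matrix.charmatrix M * C' (star U) := by
    rw [Matrix.charmatrix]
    rw [Matrix.charmatrix]
    rw [mul_sub, sub_mul]
    congr 1
    · have comm : C' U * Matrix.scalar m (X : ℝ[X]) = Matrix.scalar m (X : ℝ[X]) * C' U :=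
        (Matrix.scalar_commute (X : ℝ[X]) (fun r => Commute.all _ _) (C' U)).symm
      rw [comm, mul_assoc, ← _root_.map_mul, h2, _root_.map_one, mul_one]
    · rw [_root_.map_mul, _root_.map_mul]
  rw [Matrix.charpoly, Matrix.charpoly, hcm, Matrix.det_mul, Matrix.det_mul]
  have hC1 : C' U * C' (star U) = 1 := by rw [← _root_.map_mul, h2, _root_.map_one]
  have hdet : (C' U).det * (C' (star U)).det = 1 := by
    rw [← Matrix.det_mul, hC1, Matrix.det_one]
  calc (C' U).det * (Matrix.charmatrix M).det * (C' (star U)).det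
      = (Matrix.charmatrix M).det * ((C' U).det * (C' (star U)).det) := by ring
    _ = (Matrix.charmatrix M).det := by rw [hdet, mul_one]

lemma my_spectral (A : Matrix m m ℝ) (hA : A.IsHermitian) :
    A = (hA.eigenvectorUnitary : Matrix m m ℝ) * Matrix.diagonal hA.eigenvalues
      * star (hA.eigenvectorUnitary : Matrix m m ℝ) := by
  have h := hA.spectral_theorem
  have hd : Matrix.diagonal ((RCLike.ofReal : ℝ → ℝ) ∘ hA.eigenvalues)
      = Matrix.diagonal hA.eigenvalues := by
    congr 1
  rw [hd] at h
  exact h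

lemma my_roots_charpoly (A : Matrix m m ℝ) (hA : A.IsHermitian) :
    A.charpoly.roots = Finset.univ.val.map hA.eigenvalues := by
  conv_lhs => rw [my_spectral A hA]
  rw [my_charpoly_conj_s8 _ _ (hA.eigenvectorUnitary).2, my_charpoly_diagonal]
  rw [Finset.prod_eq_multiset_prod,
    show Finset.univ.val.map (fun i => X - C (hA.eigenvalues i))
        = ((Finset.univ.val.map hA.eigenvalues).map fun a => X - C a) from
      (Multiset.map_map (fun a => X - C a) hA.eigenvalues Finset.univ.val).symm]
  exact roots_multiset_prod_X_sub_C _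

lemma my_sq_decomp (A : Matrix m m ℝ) (hA : A.IsHermitian) :
    A * A = (hA.eigenvectorUnitary : Matrix m m ℝ)
      * Matrix.diagonal (fun i => hA.eigenvalues i * hA.eigenvalues i)
      * star (hA.eigenvectorUnitary : Matrix m m ℝ) := by
  set U := (hA.eigenvectorUnitary : Matrix m m ℝ) with hUdef
  have h1 : star U * U = 1 := Matrix.UnitaryGroup.star_mul_self hA.eigenvectorUnitary
  conv_lhs => rw [my_spectral A hA]
  rw [← Matrix.diagonal_mul_diagonal]
  set D := Matrix.diagonal hA.eigenvalues
  calc U * D * star U * (U * D * star U)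
      = U * (D * (star U * U) * D) * star U := by simp only [mul_assoc]
    _ = U * (D * D) * star U := by rw [h1, mul_one]

lemma my_roots_sq (A : Matrix m m ℝ) (hA : A.IsHermitian) :
    (A * A).charpoly.roots = (Finset.univ.val.map hA.eigenvalues).map (fun x => x * x) := by
  rw [my_sq_decomp A hA, my_charpoly_conj_s8 _ _ (hA.eigenvectorUnitary).2, my_charpoly_diagonal]
  rw [Finset.prod_eq_multiset_prod,
    show Finset.univ.val.map (fun i => X - C (hA.eigenvalues i * hA.eigenvalues i))
        = ((Finset.univ.val.map hA.eigenvalues).map (fun x => x * x)).map fun a => X - C a from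
      by rw [Multiset.map_map, Multiset.map_map]; rfl]
  exact roots_multiset_prod_X_sub_C _

lemma my_trace_cube (A : Matrix m m ℝ) (hA : A.IsHermitian) :
    (A * A * A).trace = ∑ i, (hA.eigenvalues i) ^ 3 := by
  set U := (hA.eigenvectorUnitary : Matrix m m ℝ) with hUdef
  have h1 : star U * U = 1 := Matrix.UnitaryGroup.star_mul_self hA.eigenvectorUnitary
  have hdec : A * A * A = U * Matrix.diagonal (fun i => hA.eigenvalues i ^ 3) * star U := by
    conv_lhs => rw [my_spectral A hA]
    have h3 : Matrix.diagonal (fun i => hA.eigenvalues i ^ 3)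
        = Matrix.diagonal hA.eigenvalues * Matrix.diagonal hA.eigenvalues
          * Matrix.diagonal hA.eigenvalues := by
      rw [Matrix.diagonal_mul_diagonal, Matrix.diagonal_mul_diagonal,
        show (fun i => hA.eigenvalues i * hA.eigenvalues i * hA.eigenvalues i)
            = (fun i => hA.eigenvalues i ^ 3) from funext fun i => by ring]
    rw [h3]
    set D := Matrix.diagonal hA.eigenvalues
    calc U * D * star U * (U * D * star U) * (U * D * star U)
        = U * (D * (star U * U) * (D * ((star U * U) * (D * star U)))) := by
          simp only [mul_assoc]
      _ = U * (D * D * D) * star U := by rw [h1]; simp only [one_mul, mul_assoc]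
  rw [hdec, Matrix.trace_mul_comm, ← mul_assoc, h1, one_mul, Matrix.trace_diagonal]

end Spectral

/-! ### Auxiliary `ZMod` lemmas -/

section ZModHelpers

variable {n : ℕ}

lemma cast_eq_iff (a b : ℕ) (ha : a < n) (hb : b < n) :
    ((a : ZMod n) = (b : ZMod n)) ↔ a = b := by
  rw [ZMod.natCast_eq_natCast_iff, Nat.ModEq, Nat.mod_eq_of_lt ha, Nat.mod_eq_of_lt hb]

lemma mem_quad {a1 a2 a3 a4 m : ℕ} (h1 : a1 < n) (h2 : a2 < n) (h3 : a3 < n) (h4 : a4 < n)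
    (hm : m < n) :
    ((m : ZMod n) ∈ ({((a1 : ℕ) : ZMod n), ((a2 : ℕ) : ZMod n), ((a3 : ℕ) : ZMod n),
        ((a4 : ℕ) : ZMod n)} : Finset (ZMod n)))
      ↔ (m = a1 ∨ m = a2 ∨ m = a3 ∨ m = a4) := by
  simp only [Finset.mem_insert, Finset.mem_singleton, cast_eq_iff _ _ hm h1,
    cast_eq_iff _ _ hm h2, cast_eq_iff _ _ hm h3, cast_eq_iff _ _ hm h4]

lemma cast_add_cast_eq (a b c d : ℕ) (h : a + b = c + d * n) :
    ((a : ZMod n) + (b : ZMod n)) = (c : ZMod n) := by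
  have h0 : ((a + b : ℕ) : ZMod n) = ((c + d * n : ℕ) : ZMod n) := by rw [h]
  push_cast [ZMod.natCast_self] at h0
  linear_combination h0

lemma neg_cast (x y : ℕ) (h : x + y = n) : -((x : ZMod n)) = (y : ZMod n) := by
  have h0 : ((x + y : ℕ) : ZMod n) = 0 := by rw [h]; exact ZMod.natCast_self n
  push_cast at h0
  linear_combination -h0

lemma neg_add_cast (x y z c : ℕ) (h : x + y + z = c * n) :
    -((x : ZMod n) + (y : ZMod n)) = (z : ZMod n) := by
  have h0 : ((x + y + z : ℕ) : ZMod n) = ((c * n : ℕ) : ZMod n) := by rw [h]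
  push_cast [ZMod.natCast_self] at h0
  linear_combination -h0

end ZModHelpers

lemma sum_quad {α M : Type*} [DecidableEq α] [AddCommMonoid M] {a b c d : α}
    (hab : a ≠ b) (hac : a ≠ c) (had : a ≠ d) (hbc : b ≠ c) (hbd : b ≠ d) (hcd : c ≠ d)
    (f : α → M) :
    ∑ x ∈ ({a, b, c, d} : Finset α), f x = f a + (f b + (f c + f d)) := by
  rw [Finset.sum_insert (by simp [hab, hac, had]),
    Finset.sum_insert (by simp [hbc, hbd]),
    Finset.sum_insert (by simp [hcd]), Finset.sum_singleton]

lemma sum_ind {n : ℕ} [NeZero n] (S : Finset (ZMod n)) (F : ZMod n → ℝ) :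
    ∑ a : ZMod n, (if a ∈ S then (1 : ℝ) else 0) * F a = ∑ a ∈ S, F a := by
  rw [show (fun a => (if a ∈ S then (1 : ℝ) else 0) * F a)
      = fun a => (if a ∈ S then F a else 0) from funext fun a => by split <;> simp,
    Finset.sum_ite_mem, Finset.univ_inter]

lemma trace_cube_circ (n : ℕ) [NeZero n] (S : Finset (ZMod n)) :
    (circAdj n S * circAdj n S * circAdj n S).trace
      = (n : ℝ) * ∑ a : ZMod n, ∑ b : ZMod n,
          (if a ∈ S then (1 : ℝ) else 0) * ((if b ∈ S then (1 : ℝ) else 0) *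
            (if -(a + b) ∈ S then (1 : ℝ) else 0)) := by
  set A := circAdj n S with hAdef
  have hA : ∀ i j, A i j = if j - i ∈ S then (1 : ℝ) else 0 := fun i j => rfl
  have key : ∀ i : ZMod n, (A * A * A) i i
      = ∑ a : ZMod n, ∑ b : ZMod n, (if a ∈ S then (1 : ℝ) else 0) *
          ((if b ∈ S then (1 : ℝ) else 0) * (if -(a + b) ∈ S then (1 : ℝ) else 0)) := by
    intro i
    rw [Matrix.mul_apply]
    have step1 : ∀ x, (A * A) i x * A x i = ∑ y : ZMod n, A i y * (A y x * A x i) := by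
      intro x
      rw [Matrix.mul_apply, Finset.sum_mul]
      exact Finset.sum_congr rfl fun y _ => by ring
    rw [Finset.sum_congr rfl fun x _ => step1 x, Finset.sum_comm]
    set G : ZMod n → ℝ := fun y => ∑ x : ZMod n, A i y * (A y x * A x i) with hG
    have outer : ∑ y : ZMod n, G y = ∑ a : ZMod n, G (i + a) :=
      (Fintype.sum_equiv (Equiv.addLeft i) (fun a => G (i + a)) G (fun a => rfl)).symm
    rw [outer]
    refine Finset.sum_congr rfl fun a _ => ?_
    have inner : G (i + a)
        = ∑ b : ZMod n, A i (i + a) * (A (i + a) (i + a + b) * A (i + a + b) i) :=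
      (Fintype.sum_equiv (Equiv.addLeft (i + a))
        (fun b => A i (i + a) * (A (i + a) (i + a + b) * A (i + a + b) i))
        (fun x => A i (i + a) * (A (i + a) x * A x i)) (fun b => rfl)).symm
    rw [inner]
    refine Finset.sum_congr rfl fun b _ => ?_
    rw [hA, hA, hA]
    have e1 : i + a - i = a := by ring
    have e2 : i + a + b - (i + a) = b := by ring
    have e3 : i - (i + a + b) = -(a + b) := by ring
    rw [e1, e2, e3]
  rw [Matrix.trace]
  simp only [Matrix.diag]
  rw [Finset.sum_congr rfl fun i _ => key i, Finset.sum_const, Finset.card_univ, ZMod.card,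
    nsmul_eq_mul]

lemma herm_circ (n : ℕ) [NeZero n] (S : Finset (ZMod n)) (h : ∀ z ∈ S, -z ∈ S) :
    (circAdj n S).IsHermitian := by
  have hiff : ∀ z : ZMod n, (-z ∈ S ↔ z ∈ S) :=
    fun z => ⟨fun hz => by simpa using h _ hz, h z⟩
  refine Matrix.ext fun i j => ?_
  rw [Matrix.conjTranspose_apply, star_trivial]
  show (if i - j ∈ S then (1 : ℝ) else 0) = (if j - i ∈ S then (1 : ℝ) else 0)
  rw [show i - j = -(j - i) by ring]
  exact if_congr (hiff (j - i)) rfl rfl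

lemma filter_abs (s : Multiset ℝ) :
    (s.filter (fun x => x ≠ 0)).map (fun x => |x|)
      = (s.map (fun x => |x|)).filter (fun x => x ≠ 0) := by
  rw [Multiset.filter_map]
  exact (Multiset.map_congr (Multiset.filter_congr fun x _ => by
    simp [Function.comp, abs_ne_zero]) (fun _ _ => rfl)).symm

theorem stmt8 (k n : ℕ) [NeZero n] (hk : 6 ≤ k) (hn : n = 2 * k)
    (S1 S2 : Finset (ZMod n))
    (hS1 : S1 = {((1 : ℕ) : ZMod n), ((2 : ℕ) : ZMod n),
                 ((2 * k - 2 : ℕ) : ZMod n), ((2 * k - 1 : ℕ) : ZMod n)})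
    (hS2 : S2 = {((k - 2 : ℕ) : ZMod n), ((k - 1 : ℕ) : ZMod n),
                 ((k + 1 : ℕ) : ZMod n), ((k + 2 : ℕ) : ZMod n)}) :
    absNonzeroSpectrum n S1 = absNonzeroSpectrum n S2 ∧
      circSpectrum n S1 ≠ circSpectrum n S2 := by
  subst hn
  have hk12 : 12 ≤ 2 * k := by omega
  -- closure under negation
  have hneg1 : ∀ z ∈ S1, -z ∈ S1 := by
    intro z hz
    rw [hS1] at hz ⊢
    simp only [Finset.mem_insert, Finset.mem_singleton] at hz ⊢
    rcases hz with h | h | h | h <;> subst h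
    · rw [neg_cast 1 (2 * k - 1) (by omega)]; simp
    · rw [neg_cast 2 (2 * k - 2) (by omega)]; simp
    · rw [neg_cast (2 * k - 2) 2 (by omega)]; simp
    · rw [neg_cast (2 * k - 1) 1 (by omega)]; simp
  have hneg2 : ∀ z ∈ S2, -z ∈ S2 := by
    intro z hz
    rw [hS2] at hz ⊢
    simp only [Finset.mem_insert, Finset.mem_singleton] at hz ⊢
    rcases hz with h | h | h | h <;> subst h
    · rw [neg_cast (k - 2) (k + 2) (by omega)]; simp
    · rw [neg_cast (k - 1) (k + 1) (by omega)]; simp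
    · rw [neg_cast (k + 1) (k - 1) (by omega)]; simp
    · rw [neg_cast (k + 2) (k - 2) (by omega)]; simp
  have hH1 : (circAdj (2 * k) S1).IsHermitian := herm_circ (2 * k) S1 hneg1
  have hH2 : (circAdj (2 * k) S2).IsHermitian := herm_circ (2 * k) S2 hneg2
  -- the shift matrix P
  set P : Matrix (ZMod (2 * k)) (ZMod (2 * k)) ℝ :=
    fun i j => if j - i = ((k : ℕ) : ZMod (2 * k)) then 1 else 0 with hPdef
  have hmulR : ∀ (B : Matrix (ZMod (2 * k)) (ZMod (2 * k)) ℝ) (i j : ZMod (2 * k)),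
      (B * P) i j = B i (j - ((k : ℕ) : ZMod (2 * k))) := by
    intro B i j
    rw [Matrix.mul_apply]
    have hPx : ∀ x, P x j = if x = j - ((k : ℕ) : ZMod (2 * k)) then (1 : ℝ) else 0 := by
      intro x
      show (if j - x = ((k : ℕ) : ZMod (2 * k)) then (1 : ℝ) else 0) = _
      refine if_congr ?_ rfl rfl
      constructor <;> intro h <;> linear_combination -h
    simp only [hPx, mul_ite, mul_one, mul_zero]
    rw [Finset.sum_ite_eq' Finset.univ (j - ((k : ℕ) : ZMod (2 * k))) (fun x => B i x)]
    simp
  have hmulL : ∀ (B : Matrix (ZMod (2 * k)) (ZMod (2 * k)) ℝ) (i j : ZMod (2 * k)),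
      (P * B) i j = B (((k : ℕ) : ZMod (2 * k)) + i) j := by
    intro B i j
    rw [Matrix.mul_apply]
    have hPx : ∀ x, P i x = if x = ((k : ℕ) : ZMod (2 * k)) + i then (1 : ℝ) else 0 := by
      intro x
      show (if x - i = ((k : ℕ) : ZMod (2 * k)) then (1 : ℝ) else 0) = _
      refine if_congr ?_ rfl rfl
      constructor <;> intro h <;> linear_combination h
    simp only [hPx, ite_mul, one_mul, zero_mul]
    rw [Finset.sum_ite_eq' Finset.univ (((k : ℕ) : ZMod (2 * k)) + i) (fun x => B x j)]
    simp
  have hshift : ∀ z : ZMod (2 * k), z ∈ S2 ↔ z - ((k : ℕ) : ZMod (2 * k)) ∈ S1 := by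
    intro z
    have c1 : ((1 : ℕ) : ZMod (2 * k)) + ((k : ℕ) : ZMod (2 * k)) = ((k + 1 : ℕ) : ZMod (2 * k)) :=
      cast_add_cast_eq 1 k (k + 1) 0 (by omega)
    have c2 : ((2 : ℕ) : ZMod (2 * k)) + ((k : ℕ) : ZMod (2 * k)) = ((k + 2 : ℕ) : ZMod (2 * k)) :=
      cast_add_cast_eq 2 k (k + 2) 0 (by omega)
    have c3 : ((2 * k - 2 : ℕ) : ZMod (2 * k)) + ((k : ℕ) : ZMod (2 * k))
        = ((k - 2 : ℕ) : ZMod (2 * k)) := cast_add_cast_eq (2 * k - 2) k (k - 2) 1 (by omega)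
    have c4 : ((2 * k - 1 : ℕ) : ZMod (2 * k)) + ((k : ℕ) : ZMod (2 * k))
        = ((k - 1 : ℕ) : ZMod (2 * k)) := cast_add_cast_eq (2 * k - 1) k (k - 1) 1 (by omega)
    rw [hS1, hS2]
    simp only [Finset.mem_insert, Finset.mem_singleton, sub_eq_iff_eq_add]
    rw [c1, c2, c3, c4]
    tauto
  have hA2P : circAdj (2 * k) S2 = circAdj (2 * k) S1 * P := by
    refine Matrix.ext fun i j => ?_
    rw [hmulR]
    show (if j - i ∈ S2 then (1 : ℝ) else 0)
      = (if (j - ((k : ℕ) : ZMod (2 * k))) - i ∈ S1 then (1 : ℝ) else 0)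
    rw [show (j - ((k : ℕ) : ZMod (2 * k))) - i = (j - i) - ((k : ℕ) : ZMod (2 * k)) by ring]
    exact if_congr (hshift (j - i)) rfl rfl
  have hcommP : P * circAdj (2 * k) S1 = circAdj (2 * k) S1 * P := by
    refine Matrix.ext fun i j => ?_
    rw [hmulR, hmulL]
    show (if j - (((k : ℕ) : ZMod (2 * k)) + i) ∈ S1 then (1 : ℝ) else 0)
      = (if (j - ((k : ℕ) : ZMod (2 * k))) - i ∈ S1 then (1 : ℝ) else 0)
    rw [show j - (((k : ℕ) : ZMod (2 * k)) + i) = (j - ((k : ℕ) : ZMod (2 * k))) - i by ring]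
  have h2K : ((k : ℕ) : ZMod (2 * k)) + ((k : ℕ) : ZMod (2 * k)) = 0 := by
    have h' := cast_add_cast_eq (n := 2 * k) k k 0 1 (by omega)
    simpa using h'
  have hPP : P * P = 1 := by
    refine Matrix.ext fun i j => ?_
    rw [hmulL]
    show (if j - (((k : ℕ) : ZMod (2 * k)) + i) = ((k : ℕ) : ZMod (2 * k)) then (1 : ℝ) else 0)
      = (1 : Matrix (ZMod (2 * k)) (ZMod (2 * k)) ℝ) i j
    rw [Matrix.one_apply]
    refine if_congr ?_ rfl rfl
    constructor <;> intro h <;> linear_combination -h - h2K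
  have hsq : circAdj (2 * k) S2 * circAdj (2 * k) S2
      = circAdj (2 * k) S1 * circAdj (2 * k) S1 := by
    rw [hA2P]
    calc circAdj (2 * k) S1 * P * (circAdj (2 * k) S1 * P)
        = circAdj (2 * k) S1 * (P * circAdj (2 * k) S1 * P) := by simp only [mul_assoc]
      _ = circAdj (2 * k) S1 * (circAdj (2 * k) S1 * P * P) := by rw [hcommP]
      _ = circAdj (2 * k) S1 * (circAdj (2 * k) S1 * (P * P)) := by simp only [mul_assoc]
      _ = circAdj (2 * k) S1 * (circAdj (2 * k) S1 * 1) := by rw [hPP]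
      _ = circAdj (2 * k) S1 * circAdj (2 * k) S1 := by rw [mul_one]
  -- spectra as eigenvalue multisets
  have r1 : circSpectrum (2 * k) S1 = Finset.univ.val.map hH1.eigenvalues :=
    my_roots_charpoly _ hH1
  have r2 : circSpectrum (2 * k) S2 = Finset.univ.val.map hH2.eigenvalues :=
    my_roots_charpoly _ hH2
  have hmapsq : (Finset.univ.val.map hH1.eigenvalues).map (fun x => x * x)
      = (Finset.univ.val.map hH2.eigenvalues).map (fun x => x * x) := by
    rw [← my_roots_sq _ hH1, ← my_roots_sq _ hH2, hsq]
  have habs : (Finset.univ.val.map hH1.eigenvalues).map (fun x : ℝ => |x|)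
      = (Finset.univ.val.map hH2.eigenvalues).map (fun x : ℝ => |x|) := by
    have hc : ∀ s : Multiset ℝ,
        s.map (fun x => |x|) = (s.map (fun x => x * x)).map Real.sqrt := by
      intro s
      rw [Multiset.map_map]
      exact Multiset.map_congr rfl fun x _ => (Real.sqrt_mul_self_eq_abs x).symm
    rw [hc, hc, hmapsq]
  constructor
  · -- singular cospectrality
    unfold absNonzeroSpectrum
    rw [filter_abs, filter_abs, r1, r2, habs]
  · -- not cospectral
    intro hEq
    have he : Finset.univ.val.map hH1.eigenvalues = Finset.univ.val.map hH2.eigenvalues := by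
      rw [← r1, ← r2, hEq]
    have hsum3 : ∑ i, hH1.eigenvalues i ^ 3 = ∑ i, hH2.eigenvalues i ^ 3 := by
      have hms : ∀ f : ZMod (2 * k) → ℝ,
          ∑ i, f i ^ 3 = ((Finset.univ.val.map f).map (fun x : ℝ => x ^ 3)).sum := by
        intro f; rw [Multiset.map_map]; rfl
      rw [hms, hms, he]
    -- membership criteria
    have hmemS1 : ∀ z : ℕ, z < 2 * k →
        (((z : ℕ) : ZMod (2 * k)) ∈ S1 ↔ (z = 1 ∨ z = 2 ∨ z = 2 * k - 2 ∨ z = 2 * k - 1)) := by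
      intro z hz; rw [hS1]
      exact mem_quad (by omega) (by omega) (by omega) (by omega) hz
    have hmemS2 : ∀ z : ℕ, z < 2 * k →
        (((z : ℕ) : ZMod (2 * k)) ∈ S2 ↔ (z = k - 2 ∨ z = k - 1 ∨ z = k + 1 ∨ z = k + 2)) := by
      intro z hz; rw [hS2]
      exact mem_quad (by omega) (by omega) (by omega) (by omega) hz
    have t1pos : ∀ x y z c : ℕ, x + y + z = c * (2 * k) → z < 2 * k →
        (z = 1 ∨ z = 2 ∨ z = 2 * k - 2 ∨ z = 2 * k - 1) →
        (if -((x : ZMod (2 * k)) + (y : ZMod (2 * k))) ∈ S1 then (1 : ℝ) else 0) = 1 := by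
      intro x y z c h hz hm
      rw [neg_add_cast x y z c h, if_pos ((hmemS1 z hz).mpr hm)]
    have t1zero : ∀ x y z c : ℕ, x + y + z = c * (2 * k) → z < 2 * k →
        ¬(z = 1 ∨ z = 2 ∨ z = 2 * k - 2 ∨ z = 2 * k - 1) →
        (if -((x : ZMod (2 * k)) + (y : ZMod (2 * k))) ∈ S1 then (1 : ℝ) else 0) = 0 := by
      intro x y z c h hz hm
      rw [neg_add_cast x y z c h, if_neg (fun hc => hm ((hmemS1 z hz).mp hc))]
    have t2zero : ∀ x y z c : ℕ, x + y + z = c * (2 * k) → z < 2 * k →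
        ¬(z = k - 2 ∨ z = k - 1 ∨ z = k + 1 ∨ z = k + 2) →
        (if -((x : ZMod (2 * k)) + (y : ZMod (2 * k))) ∈ S2 then (1 : ℝ) else 0) = 0 := by
      intro x y z c h hz hm
      rw [neg_add_cast x y z c h, if_neg (fun hc => hm ((hmemS2 z hz).mp hc))]
    have tle : ∀ w : ZMod (2 * k), (if w ∈ S2 then (1 : ℝ) else 0) ≤ 1 := by
      intro w; split <;> norm_num
    have hexp1 : ∀ F : ZMod (2 * k) → ℝ, ∑ a ∈ S1, F a
        = F ((1 : ℕ) : ZMod (2 * k)) + (F ((2 : ℕ) : ZMod (2 * k))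
          + (F ((2 * k - 2 : ℕ) : ZMod (2 * k)) + F ((2 * k - 1 : ℕ) : ZMod (2 * k)))) := by
      intro F; rw [hS1]
      refine sum_quad ?_ ?_ ?_ ?_ ?_ ?_ F <;>
        · rw [Ne, cast_eq_iff _ _ (by omega) (by omega)]; omega
    have hexp2 : ∀ F : ZMod (2 * k) → ℝ, ∑ a ∈ S2, F a
        = F ((k - 2 : ℕ) : ZMod (2 * k)) + (F ((k - 1 : ℕ) : ZMod (2 * k))
          + (F ((k + 1 : ℕ) : ZMod (2 * k)) + F ((k + 2 : ℕ) : ZMod (2 * k)))) := by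
      intro F; rw [hS2]
      refine sum_quad ?_ ?_ ?_ ?_ ?_ ?_ F <;>
        · rw [Ne, cast_eq_iff _ _ (by omega) (by omega)]; omega
    have hT1 : ∑ a ∈ S1, ∑ b ∈ S1, (if -(a + b) ∈ S1 then (1 : ℝ) else 0) = 6 := by
      simp only [hexp1]
      rw [t1pos 1 1 (2 * k - 2) 1 (by omega) (by omega) (by omega),
        t1zero 1 2 (2 * k - 3) 1 (by omega) (by omega) (by omega),
        t1pos 1 (2 * k - 2) 1 1 (by omega) (by omega) (by omega),
        t1zero 1 (2 * k - 1) 0 1 (by omega) (by omega) (by omega),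
        t1zero 2 1 (2 * k - 3) 1 (by omega) (by omega) (by omega),
        t1zero 2 2 (2 * k - 4) 1 (by omega) (by omega) (by omega),
        t1zero 2 (2 * k - 2) 0 1 (by omega) (by omega) (by omega),
        t1pos 2 (2 * k - 1) (2 * k - 1) 2 (by omega) (by omega) (by omega),
        t1pos (2 * k - 2) 1 1 1 (by omega) (by omega) (by omega),
        t1zero (2 * k - 2) 2 0 1 (by omega) (by omega) (by omega),
        t1zero (2 * k - 2) (2 * k - 2) 4 2 (by omega) (by omega) (by omega),
        t1zero (2 * k - 2) (2 * k - 1) 3 2 (by omega) (by omega) (by omega),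
        t1zero (2 * k - 1) 1 0 1 (by omega) (by omega) (by omega),
        t1pos (2 * k - 1) 2 (2 * k - 1) 2 (by omega) (by omega) (by omega),
        t1zero (2 * k - 1) (2 * k - 2) 3 2 (by omega) (by omega) (by omega),
        t1pos (2 * k - 1) (2 * k - 1) 2 2 (by omega) (by omega) (by omega)]
      norm_num
    have hT2 : ∑ a ∈ S2, ∑ b ∈ S2, (if -(a + b) ∈ S2 then (1 : ℝ) else 0) ≤ 2 := by
      simp only [hexp2]
      rw [t2zero (k - 2) (k - 1) 3 1 (by omega) (by omega) (by omega),
        t2zero (k - 2) (k + 1) 1 1 (by omega) (by omega) (by omega),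
        t2zero (k - 2) (k + 2) 0 1 (by omega) (by omega) (by omega),
        t2zero (k - 1) (k - 2) 3 1 (by omega) (by omega) (by omega),
        t2zero (k - 1) (k - 1) 2 1 (by omega) (by omega) (by omega),
        t2zero (k - 1) (k + 1) 0 1 (by omega) (by omega) (by omega),
        t2zero (k - 1) (k + 2) (2 * k - 1) 2 (by omega) (by omega) (by omega),
        t2zero (k + 1) (k - 2) 1 1 (by omega) (by omega) (by omega),
        t2zero (k + 1) (k - 1) 0 1 (by omega) (by omega) (by omega),
        t2zero (k + 1) (k + 1) (2 * k - 2) 2 (by omega) (by omega) (by omega),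
        t2zero (k + 1) (k + 2) (2 * k - 3) 2 (by omega) (by omega) (by omega),
        t2zero (k + 2) (k - 2) 0 1 (by omega) (by omega) (by omega),
        t2zero (k + 2) (k - 1) (2 * k - 1) 2 (by omega) (by omega) (by omega),
        t2zero (k + 2) (k + 1) (2 * k - 3) 2 (by omega) (by omega) (by omega)]
      have b1 := tle (-(((k - 2 : ℕ) : ZMod (2 * k)) + ((k - 2 : ℕ) : ZMod (2 * k))))
      have b2 := tle (-(((k + 2 : ℕ) : ZMod (2 * k)) + ((k + 2 : ℕ) : ZMod (2 * k))))
      linarith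
    have hred : ∀ S : Finset (ZMod (2 * k)),
        (∑ a : ZMod (2 * k), ∑ b : ZMod (2 * k), (if a ∈ S then (1 : ℝ) else 0) *
            ((if b ∈ S then (1 : ℝ) else 0) * (if -(a + b) ∈ S then (1 : ℝ) else 0)))
          = ∑ a ∈ S, ∑ b ∈ S, (if -(a + b) ∈ S then (1 : ℝ) else 0) := by
      intro S
      have h1 : ∀ a : ZMod (2 * k),
          (∑ b : ZMod (2 * k), (if a ∈ S then (1 : ℝ) else 0) *
            ((if b ∈ S then (1 : ℝ) else 0) * (if -(a + b) ∈ S then (1 : ℝ) else 0)))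
          = (if a ∈ S then (1 : ℝ) else 0) *
              ∑ b ∈ S, (if -(a + b) ∈ S then (1 : ℝ) else 0) := by
        intro a
        rw [← Finset.mul_sum]
        congr 1
        exact sum_ind S _
      rw [Finset.sum_congr rfl fun a _ => h1 a]
      exact sum_ind S _
    have htr : ((2 * k : ℕ) : ℝ) * (∑ a ∈ S1, ∑ b ∈ S1, (if -(a + b) ∈ S1 then (1 : ℝ) else 0))
        = ((2 * k : ℕ) : ℝ) * (∑ a ∈ S2, ∑ b ∈ S2, (if -(a + b) ∈ S2 then (1 : ℝ) else 0)) := by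
      rw [← hred S1, ← hred S2, ← trace_cube_circ (2 * k) S1, ← trace_cube_circ (2 * k) S2]
      rw [my_trace_cube _ hH1, my_trace_cube _ hH2, hsum3]
    rw [hT1] at htr
    have hcast : (12 : ℝ) ≤ ((2 * k : ℕ) : ℝ) := by exact_mod_cast hk12
    nlinarith [htr, hT2, hcast]
end

section
/- Let α ≥ 0 be an integer, k = 4α + 9, n = 2k, and s = 2α + 4. Let S1 = {1,…,s, n−s,…,n−1} and S2 = {k−s,…,k−1, k+1,…,k+s}. Then the circulant graphs G(ℤ_n, S1) and G(ℤ_n, S2) have the same inertia: their adjacency matrices have the same numbers of positive, negative, and zero eigenvalues (counted with multiplicity). -/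
open Polynomial

/-!
The Fourier matrix `(ω^{ij})` diagonalises every circulant matrix, so `G(ℤ_n, S)` has the
eigenvalues `λ_j(S) = ∑_{a ∈ S} ω^{aj}`, `j ∈ ℤ_n`. For `S₁ = {±1, …, ±s}` these are the reals
`λ_j = ∑_{a=1}^{s} 2 cos (2πaj/n)`. Since `S₂ = k + S₁` and `ω^{kj} = (-1)^j`, the spectrum of `S₂`
is that of `S₁` with the odd-indexed eigenvalues negated, so the inertias agree as soon as, among
odd `j`, the `λ_j` are as often positive as negative. With `x = πj/n` and `n = 2(2s+1)`, the
Dirichlet identity `sin x · λ_j = sin ((2s+1)x) - sin x = sin (πj/2) - sin x` shows that for odd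
`j`, `λ_j > 0` iff `j ≡ 1 (mod 4)` and `j ≠ k`, and `λ_j < 0` iff `j ≡ 3 (mod 4)`. As
`k ≡ 1 (mod 4)`, both classes have `s` elements.
-/

open Finset ZMod
open scoped Pointwise

section Fourier

noncomputable def fourierMatrix (n : ℕ) [NeZero n] : Matrix (ZMod n) (ZMod n) ℂ :=
  .of fun i j => stdAddChar (i * j)

noncomputable def invFourierMatrix (n : ℕ) [NeZero n] : Matrix (ZMod n) (ZMod n) ℂ :=
  (n : ℂ)⁻¹ • .of fun i j => stdAddChar (-(i * j))

variable {n : ℕ} [NeZero n]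

noncomputable def circEigenvalue (S : Finset (ZMod n)) (j : ZMod n) : ℂ :=
  ∑ a ∈ S, stdAddChar (a * j)

lemma circAdj_map_mul_fourierMatrix (S : Finset (ZMod n)) :
    (circAdj n S).map (↑) * fourierMatrix n = fourierMatrix n * .diagonal (circEigenvalue S) := by
  ext i j
  rw [Matrix.mul_apply, Matrix.mul_diagonal, circEigenvalue, mul_sum,
    ← Equiv.sum_comp (Equiv.addLeft i)]
  simp only [circAdj, fourierMatrix, Matrix.map_apply, Matrix.of_apply, Equiv.coe_addLeft,
    add_sub_cancel_left, apply_ite Complex.ofReal, Complex.ofReal_one, Complex.ofReal_zero,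
    ite_mul, one_mul, zero_mul, sum_ite_mem, univ_inter, add_mul,
    AddChar.map_add_eq_mul]

lemma fourierMatrix_mul_invFourierMatrix : fourierMatrix n * invFourierMatrix n = 1 := by
  ext i j
  have horth : ∑ x : ZMod n, stdAddChar (x * (i - j)) = if i = j then (n : ℂ) else 0 := by
    simp [AddChar.sum_mulShift _ (isPrimitive_stdAddChar n), sub_eq_zero]
  rw [invFourierMatrix, Matrix.mul_smul, Matrix.smul_apply, Matrix.mul_apply, Matrix.one_apply]
  simp only [fourierMatrix, Matrix.of_apply, ← AddChar.map_add_eq_mul]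
  simp_rw [show ∀ x : ZMod n, i * x + -(x * j) = x * (i - j) from fun x => by ring, horth]
  split_ifs <;> simp

lemma charpoly_circAdj_map_s9 (S : Finset (ZMod n)) :
    ((circAdj n S).map (↑)).charpoly = ∏ j, (X - C (circEigenvalue S j)) := by
  have hinv : invFourierMatrix n * fourierMatrix n = 1 :=
    mul_eq_one_comm.mp fourierMatrix_mul_invFourierMatrix
  have hconj : (circAdj n S).map (↑) =
      fourierMatrix n * .diagonal (circEigenvalue S) * invFourierMatrix n := by
    rw [← circAdj_map_mul_fourierMatrix, Matrix.mul_assoc, fourierMatrix_mul_invFourierMatrix,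
      Matrix.mul_one]
  rw [hconj, Matrix.charpoly_mul_comm, ← Matrix.mul_assoc, hinv, Matrix.one_mul,
    Matrix.charpoly_diagonal]

lemma circSpectrum_eq_map {S : Finset (ZMod n)} {r : ZMod n → ℝ}
    (hr : ∀ j, circEigenvalue S j = r j) : circSpectrum n S = univ.val.map r := by
  have hmap : (circAdj n S).charpoly.map Complex.ofRealHom =
      (∏ j, (X - C (r j))).map Complex.ofRealHom := by
    rw [← Matrix.charpoly_map, Polynomial.map_prod]
    simp only [Polynomial.map_sub, map_X, map_C, Complex.ofRealHom_eq_coe, ← hr]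
    exact charpoly_circAdj_map_s9 S
  rw [circSpectrum, map_injective _ Complex.ofReal_injective hmap, prod_eq_multiset_prod]
  simpa only [Multiset.map_map, Function.comp_def] using
    roots_multiset_prod_X_sub_C (univ.val.map r)

lemma circEigenvalue_image_add_left (c : ZMod n) (S : Finset (ZMod n)) (j : ZMod n) :
    circEigenvalue (S.image (c + ·)) j = stdAddChar (c * j) * circEigenvalue S j := by
  rw [circEigenvalue, sum_image (fun _ _ _ _ h => add_left_cancel h), circEigenvalue, mul_sum]
  simp only [add_mul, AddChar.map_add_eq_mul]

lemma stdAddChar_add_stdAddChar_neg (x : ZMod n) :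
    stdAddChar x + stdAddChar (-x) = ↑(2 * (stdAddChar x).re) := by
  have hnorm : ‖stdAddChar x‖ = 1 := Circle.norm_coe _
  rw [AddChar.map_neg_eq_inv, RCLike.inv_eq_conj hnorm, Complex.add_conj]

lemma circEigenvalue_union_neg {T : Finset (ZMod n)} (hT : Disjoint T (-T)) (j : ZMod n) :
    circEigenvalue (T ∪ -T) j = ↑(∑ a ∈ T, 2 * (stdAddChar (a * j)).re) := by
  rw [circEigenvalue, sum_union hT, ← image_neg_eq_neg, sum_image neg_injective.injOn,
    ← sum_add_distrib, Complex.ofReal_sum]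
  simp only [neg_mul, stdAddChar_add_stdAddChar_neg]

lemma re_stdAddChar_natCast_mul (a : ℕ) (j : ZMod n) :
    (stdAddChar ((a : ZMod n) * j)).re = Real.cos (2 * a * (Real.pi * j.val / n)) := by
  have h : (a : ZMod n) * j = ((a * j.val : ℕ) : ZMod n) := by push_cast [natCast_zmod_val]; rfl
  rw [h, stdAddChar_apply, toCircle_natCast, ← Complex.exp_ofReal_mul_I_re]
  congr 2
  push_cast
  ring

lemma stdAddChar_natCast_mul_of_two_mul {k : ℕ} (hn : n = 2 * k) (j : ZMod n) :
    stdAddChar ((k : ZMod n) * j) = (-1) ^ j.val := by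
  have hk : (k : ℂ) ≠ 0 := by
    have := NeZero.ne n
    exact_mod_cast (by omega : k ≠ 0)
  have hone : stdAddChar (k : ZMod n) = -1 := by
    rw [stdAddChar_apply, toCircle_natCast, hn, ← Complex.exp_pi_mul_I]
    congr 1
    push_cast
    field_simp
  have hsmul : (k : ZMod n) * j = j.val • (k : ZMod n) := by
    rw [nsmul_eq_mul, natCast_zmod_val, mul_comm]
  rw [hsmul, AddChar.map_nsmul_eq_pow, hone]

end Fourier

lemma image_natCast_Icc_add {n : ℕ} (c a b : ℕ) :
    (Icc (c + a) (c + b)).image (Nat.cast : ℕ → ZMod n) =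
      ((Icc a b).image Nat.cast).image ((c : ZMod n) + ·) := by
  rw [← image_add_left_Icc, image_image, image_image]
  simp only [Function.comp_def, Nat.cast_add]

lemma image_natCast_Icc_sub {n c a b : ℕ} (ha : a ≤ c) (hb : b ≤ c) :
    (Icc (c - b) (c - a)).image (Nat.cast : ℕ → ZMod n) =
      (-(Icc a b).image Nat.cast).image ((c : ZMod n) + ·) := by
  have hIcc : Icc (c - b) (c - a) = (Icc a b).image (c - ·) := by
    ext y
    simp only [mem_Icc, mem_image]
    exact ⟨fun hy => ⟨c - y, by omega, by omega⟩, by rintro ⟨x, hx, rfl⟩; omega⟩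
  rw [hIcc, ← image_neg_eq_neg, image_image, image_image, image_image]
  refine image_congr fun y hy => ?_
  rw [coe_Icc, Set.mem_Icc] at hy
  simp only [Function.comp_apply, Nat.cast_sub (hy.2.trans hb), sub_eq_add_neg]

lemma disjoint_image_natCast_Icc_neg {n s : ℕ} (h : 2 * s < n) :
    Disjoint ((Icc 1 s).image (Nat.cast : ℕ → ZMod n)) (-(Icc 1 s).image Nat.cast) := by
  rw [disjoint_left]
  intro x hx hneg
  obtain ⟨a, ha, rfl⟩ := mem_image.mp hx
  obtain ⟨_, hb', hba⟩ := mem_neg.mp hneg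
  obtain ⟨b, hb, rfl⟩ := mem_image.mp hb'
  have hdvd : n ∣ b + a := by
    rw [← natCast_eq_zero_iff, Nat.cast_add, ← hba, add_neg_cancel]
  rw [mem_Icc] at ha hb
  exact absurd (Nat.le_of_dvd (by omega) hdvd) (by omega)

lemma sum_image_natCast_Icc {n : ℕ} {M : Type*} [AddCommMonoid M] {a b : ℕ} (hb : b < n)
    (f : ZMod n → M) : ∑ x ∈ (Icc a b).image Nat.cast, f x = ∑ t ∈ Icc a b, f t := by
  refine sum_image fun x hx y hy hxy => ?_
  rw [coe_Icc, Set.mem_Icc] at hx hy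
  rwa [natCast_eq_natCast_iff', Nat.mod_eq_of_lt (by omega), Nat.mod_eq_of_lt (by omega)] at hxy

section Trigonometry

open Real

noncomputable def cosSum (s : ℕ) (x : ℝ) : ℝ := ∑ a ∈ Icc 1 s, 2 * cos (2 * a * x)

lemma sin_mul_cosSum (s : ℕ) (x : ℝ) : sin x * cosSum s x = sin ((2 * s + 1) * x) - sin x := by
  induction s with
  | zero => simp [cosSum]
  | succ s ih =>
    rw [cosSum, sum_Icc_succ_top (by omega), mul_add, ← cosSum, ih]
    have h := two_mul_sin_mul_cos x (2 * ↑(s + 1) * x)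
    rw [show x - 2 * ↑(s + 1) * x = -((2 * s + 1) * x) by push_cast; ring,
      show x + 2 * ↑(s + 1) * x = (2 * ↑(s + 1) + 1) * x by push_cast; ring, sin_neg] at h
    linarith

section
variable {s : ℕ} {x : ℝ} (hx : 0 < sin x)
include hx

lemma cosSum_neg_of_sin_eq_neg_one (h : sin ((2 * s + 1) * x) = -1) : cosSum s x < 0 := by
  have := sin_mul_cosSum s x
  rw [h] at this
  exact neg_of_mul_neg_right (by linarith) hx.le

lemma cosSum_nonneg_of_sin_eq_one (h : sin ((2 * s + 1) * x) = 1) : 0 ≤ cosSum s x := by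
  have := sin_mul_cosSum s x
  rw [h] at this
  exact nonneg_of_mul_nonneg_right (by linarith [sin_le_one x]) hx

lemma cosSum_pos_iff_of_sin_eq_one (h : sin ((2 * s + 1) * x) = 1) :
    0 < cosSum s x ↔ sin x ≠ 1 := by
  have := sin_mul_cosSum s x
  rw [h] at this
  rw [← mul_pos_iff_of_pos_left hx, this, sub_pos]
  exact ⟨LT.lt.ne, (sin_le_one x).lt_of_ne⟩

end

lemma sin_eq_one_iff_of_mem_Ioo {x : ℝ} (h0 : 0 < x) (hπ : x < π) :
    sin x = 1 ↔ x = π / 2 := by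
  rw [← cos_sub_pi_div_two, cos_eq_one_iff_of_lt_of_lt (by linarith) (by linarith), sub_eq_zero]

lemma sin_pi_mul_div_two_of_mod_four_eq_one {t : ℕ} (h : t % 4 = 1) : sin (π * t / 2) = 1 := by
  have ht : (t : ℝ) = 4 * ↑(t / 4) + 1 := by exact_mod_cast (by omega : t = 4 * (t / 4) + 1)
  rw [show π * t / 2 = π / 2 + ↑(t / 4) * (2 * π) by rw [ht]; ring, sin_add_nat_mul_two_pi,
    sin_pi_div_two]

lemma sin_pi_mul_div_two_of_mod_four_eq_three {t : ℕ} (h : t % 4 = 3) :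
    sin (π * t / 2) = -1 := by
  have ht : (t : ℝ) = 4 * ↑(t / 4) + 3 := by exact_mod_cast (by omega : t = 4 * (t / 4) + 3)
  rw [show π * t / 2 = π / 2 + π + ↑(t / 4) * (2 * π) by rw [ht]; ring, sin_add_nat_mul_two_pi,
    sin_add_pi, sin_pi_div_two]

section
variable {n s t : ℕ} (hn : n = 2 * (2 * s + 1))
include hn

lemma two_mul_add_one_mul_pi_mul_div : (2 * s + 1) * (π * t / n) = π * t / 2 := by
  rw [hn]
  push_cast
  field_simp

variable (htn : t < n)
include htn

lemma pi_mul_div_mem_Ioo (ht0 : 0 < t) : π * t / n ∈ Set.Ioo 0 π := by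
  have hn0 : (0 : ℝ) < n := by exact_mod_cast (by omega : 0 < n)
  refine ⟨by positivity, ?_⟩
  rw [div_lt_iff₀ hn0]
  have : (t : ℝ) < n := by exact_mod_cast htn
  nlinarith [pi_pos]

lemma cosSum_nonneg_of_mod_four_eq_one (h : t % 4 = 1) : 0 ≤ cosSum s (π * t / n) := by
  obtain ⟨hx0, hxπ⟩ := pi_mul_div_mem_Ioo hn htn (by omega)
  refine cosSum_nonneg_of_sin_eq_one (sin_pos_of_pos_of_lt_pi hx0 hxπ) ?_
  rw [two_mul_add_one_mul_pi_mul_div hn, sin_pi_mul_div_two_of_mod_four_eq_one h]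

lemma cosSum_pos_iff_of_mod_four_eq_one (h : t % 4 = 1) :
    0 < cosSum s (π * t / n) ↔ t ≠ 2 * s + 1 := by
  obtain ⟨hx0, hxπ⟩ := pi_mul_div_mem_Ioo hn htn (by omega)
  rw [cosSum_pos_iff_of_sin_eq_one (sin_pos_of_pos_of_lt_pi hx0 hxπ), Ne, Ne,
    sin_eq_one_iff_of_mem_Ioo hx0 hxπ]
  · rw [hn]
    push_cast
    rw [div_eq_div_iff (by positivity) two_ne_zero, mul_assoc, mul_right_inj' pi_ne_zero]
    norm_cast
    omega
  · rw [two_mul_add_one_mul_pi_mul_div hn, sin_pi_mul_div_two_of_mod_four_eq_one h]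

lemma cosSum_neg_of_mod_four_eq_three (h : t % 4 = 3) : cosSum s (π * t / n) < 0 := by
  obtain ⟨hx0, hxπ⟩ := pi_mul_div_mem_Ioo hn htn (by omega)
  refine cosSum_neg_of_sin_eq_neg_one (sin_pos_of_pos_of_lt_pi hx0 hxπ) ?_
  rw [two_mul_add_one_mul_pi_mul_div hn, sin_pi_mul_div_two_of_mod_four_eq_three h]

lemma odd_and_cosSum_pos_iff :
    Odd t ∧ 0 < cosSum s (π * t / n) ↔ t % 4 = 1 ∧ t ≠ 2 * s + 1 := by
  rcases (by omega : t % 4 = 1 ∨ t % 4 = 3 ∨ t % 2 = 0) with h | h | h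
  · simp [Nat.odd_iff, h, cosSum_pos_iff_of_mod_four_eq_one hn htn h, (by omega : t % 2 = 1)]
  · simp [h, (cosSum_neg_of_mod_four_eq_three hn htn h).not_gt]
  · simp only [Nat.odd_iff, h]
    omega

lemma odd_and_cosSum_neg_iff : Odd t ∧ cosSum s (π * t / n) < 0 ↔ t % 4 = 3 := by
  rcases (by omega : t % 4 = 1 ∨ t % 4 = 3 ∨ t % 2 = 0) with h | h | h
  · simp [h, (cosSum_nonneg_of_mod_four_eq_one hn htn h).not_gt]
  · simp [Nat.odd_iff, h, cosSum_neg_of_mod_four_eq_three hn htn h, (by omega : t % 2 = 1)]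
  · simp only [Nat.odd_iff, h]
    omega

end

end Trigonometry

noncomputable def inertia (M : Multiset ℝ) : ℕ × ℕ × ℕ :=
  (M.countP (0 < ·), M.countP (· < 0), M.countP (· = 0))

lemma inertia_add (M N : Multiset ℝ) : inertia (M + N) = inertia M + inertia N := by
  simp only [inertia, Multiset.countP_add, Prod.mk_add_mk]

lemma inertia_map_neg {M : Multiset ℝ} (h : M.countP (0 < ·) = M.countP (· < 0)) :
    inertia (M.map Neg.neg) = inertia M := by
  simp only [inertia, Multiset.countP_map, ← Multiset.countP_eq_card_filter, Left.neg_pos_iff,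
    neg_lt_zero, neg_eq_zero, h]

lemma inertia_map_eq_of_neg_on {ι : Type*} (s : Finset ι) {f g : ι → ℝ} (p : ι → Prop)
    [DecidablePred p] (hneg : ∀ i, p i → g i = -f i) (hpos : ∀ i, ¬p i → g i = f i)
    (hbal : #{i ∈ s | p i ∧ 0 < f i} = #{i ∈ s | p i ∧ f i < 0}) :
    inertia (s.val.map g) = inertia (s.val.map f) := by
  have hflip : (s.val.filter p).map g = ((s.val.filter p).map f).map Neg.neg := by
    rw [Multiset.map_map]
    exact Multiset.map_congr rfl fun i hi => hneg i (Multiset.of_mem_filter hi)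
  have hkeep : (s.val.filter (¬p ·)).map g = (s.val.filter (¬p ·)).map f :=
    Multiset.map_congr rfl fun i hi => hpos i (Multiset.mem_filter.mp hi).2
  rw [← Multiset.filter_add_not p s.val, Multiset.map_add, Multiset.map_add, inertia_add,
    inertia_add, hflip, hkeep, inertia_map_neg]
  simp only [Multiset.countP_map, ← filter_val, filter_filter]
  exact hbal

lemma card_filter_zmod_val {n : ℕ} [NeZero n] (p : ℕ → Prop) [DecidablePred p] :
    #{j : ZMod n | p j.val} = #{t ∈ range n | p t} := by
  refine card_nbij' ZMod.val (Nat.cast) (fun j hj => ?_) (fun t ht => ?_) (fun j _ => ?_)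
    (fun t ht => ?_)
  · simp_all [ZMod.val_lt]
  · simp_all [Nat.mod_eq_of_lt]
  · simp
  · simp_all [Nat.mod_eq_of_lt]

lemma card_filter_range_mod_four (s v : ℕ) (hv : v < 4) :
    #{t ∈ range (4 * s + 2) | t % 4 = v} = s + if v < 2 then 1 else 0 := by
  have h := Nat.count_modEq_card (b := 4 * s + 2) (r := 4) (by norm_num) v
  rw [Nat.count_eq_card_filter_range, Nat.mod_eq_of_lt hv,
    show (4 * s + 2) / 4 = s by omega, show (4 * s + 2) % 4 = 2 by omega] at h
  rw [← h]
  congr 1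
  refine filter_congr fun t _ => ?_
  rw [Nat.ModEq, Nat.mod_eq_of_lt hv]

lemma card_filter_range_mod_four_eq_one (s : ℕ) (hs : Even s) :
    #{t ∈ range (4 * s + 2) | t % 4 = 1 ∧ t ≠ 2 * s + 1} = s := by
  have hk : 2 * s + 1 ∈ ({t ∈ range (4 * s + 2) | t % 4 = 1} : Finset ℕ) := by
    simp only [mem_filter, mem_range]; obtain ⟨r, rfl⟩ := hs; omega
  rw [← filter_filter, filter_ne', card_erase_of_mem hk,
    card_filter_range_mod_four s 1 (by norm_num)]
  rfl

lemma card_filter_range_mod_four_eq_three (s : ℕ) :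
    #{t ∈ range (4 * s + 2) | t % 4 = 3} = s :=
  card_filter_range_mod_four s 3 (by norm_num)

def symmIcc (n s : ℕ) : Finset (ZMod n) :=
  (Icc 1 s).image Nat.cast ∪ -(Icc 1 s).image Nat.cast

section Translate

variable {n s : ℕ} [NeZero n]

lemma circEigenvalue_symmIcc (h2s : 2 * s < n) (j : ZMod n) :
    circEigenvalue (symmIcc n s) j = cosSum s (Real.pi * j.val / n) := by
  rw [symmIcc, circEigenvalue_union_neg (disjoint_image_natCast_Icc_neg h2s),
    sum_image_natCast_Icc (by omega) fun a => 2 * (stdAddChar (a * j)).re, cosSum]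
  simp only [re_stdAddChar_natCast_mul]

lemma circSpectrum_symmIcc (h2s : 2 * s < n) :
    circSpectrum n (symmIcc n s) = univ.val.map fun j : ZMod n => cosSum s (Real.pi * j.val / n) :=
  circSpectrum_eq_map (circEigenvalue_symmIcc h2s)

lemma circSpectrum_image_add_symmIcc {k : ℕ} (hn : n = 2 * k) (hsk : s < k) :
    circSpectrum n ((symmIcc n s).image ((k : ZMod n) + ·)) =
      univ.val.map fun j : ZMod n => (-1) ^ j.val * cosSum s (Real.pi * j.val / n) :=
  circSpectrum_eq_map fun j => by
    rw [circEigenvalue_image_add_left, stdAddChar_natCast_mul_of_two_mul hn,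
      circEigenvalue_symmIcc (by omega)]
    push_cast
    rfl

variable (hn : n = 2 * (2 * s + 1))
include hn

lemma card_odd_cosSum_pos (hs : Even s) :
    #{j : ZMod n | Odd j.val ∧ 0 < cosSum s (Real.pi * j.val / n)} = s :=
  calc _ = #{t ∈ range n | Odd t ∧ 0 < cosSum s (Real.pi * (t : ℕ) / n)} :=
        card_filter_zmod_val _
    _ = #{t ∈ range n | t % 4 = 1 ∧ t ≠ 2 * s + 1} :=
      congrArg card (filter_congr fun t ht => odd_and_cosSum_pos_iff hn (mem_range.mp ht))
    _ = s := by rw [show n = 4 * s + 2 by omega, card_filter_range_mod_four_eq_one s hs]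

lemma card_odd_cosSum_neg :
    #{j : ZMod n | Odd j.val ∧ cosSum s (Real.pi * j.val / n) < 0} = s :=
  calc _ = #{t ∈ range n | Odd t ∧ cosSum s (Real.pi * (t : ℕ) / n) < 0} :=
        card_filter_zmod_val _
    _ = #{t ∈ range n | t % 4 = 3} :=
      congrArg card (filter_congr fun t ht => odd_and_cosSum_neg_iff hn (mem_range.mp ht))
    _ = s := by rw [show n = 4 * s + 2 by omega, card_filter_range_mod_four_eq_three s]

theorem inertia_circSpectrum_image_add_symmIcc {k : ℕ} (hk : k = 2 * s + 1) (hs : Even s) :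
    inertia (circSpectrum n ((symmIcc n s).image ((k : ZMod n) + ·))) =
      inertia (circSpectrum n (symmIcc n s)) := by
  rw [circSpectrum_image_add_symmIcc (by omega) (by omega), circSpectrum_symmIcc (by omega)]
  refine inertia_map_eq_of_neg_on univ (fun j : ZMod n => Odd j.val)
    (fun j hj => by simp [hj.neg_one_pow])
    (fun j hj => by simp [(Nat.not_odd_iff_even.mp hj).neg_one_pow]) ?_
  rw [card_odd_cosSum_pos hn hs, card_odd_cosSum_neg hn]

end Translate

theorem stmt9 (α k s n : ℕ) [NeZero n] (hk : k = 4 * α + 9) (hs : s = 2 * α + 4)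
    (hn : n = 2 * k)
    (S1 S2 : Finset (ZMod n))
    (hS1 : S1 = ((Finset.Icc 1 s).image fun h : ℕ => (h : ZMod n)) ∪
                ((Finset.Icc (n - s) (n - 1)).image fun h : ℕ => (h : ZMod n)))
    (hS2 : S2 = ((Finset.Icc (k - s) (k - 1)).image fun h : ℕ => (h : ZMod n)) ∪
                ((Finset.Icc (k + 1) (k + s)).image fun h : ℕ => (h : ZMod n))) :
    Multiset.card ((circSpectrum n S1).filter (fun x => 0 < x)) =
        Multiset.card ((circSpectrum n S2).filter (fun x => 0 < x)) ∧
      Multiset.card ((circSpectrum n S1).filter (fun x => x < 0)) =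
        Multiset.card ((circSpectrum n S2).filter (fun x => x < 0)) ∧
      Multiset.card ((circSpectrum n S1).filter (fun x => x = 0)) =
        Multiset.card ((circSpectrum n S2).filter (fun x => x = 0)) := by
  have hS1' : S1 = symmIcc n s := by
    rw [hS1, symmIcc, image_natCast_Icc_sub (by omega) (by omega), natCast_self]
    simp only [zero_add, image_id']
  have hS2' : S2 = (symmIcc n s).image ((k : ZMod n) + ·) := by
    rw [hS2, symmIcc, image_natCast_Icc_sub (by omega) (by omega), image_natCast_Icc_add,
      ← image_union, union_comm]
  have h := inertia_circSpectrum_image_add_symmIcc (by omega : n = 2 * (2 * s + 1))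
    (by omega : k = 2 * s + 1) ⟨α + 2, by omega⟩
  rw [← hS2', ← hS1'] at h
  simp only [inertia, Prod.ext_iff, Multiset.countP_eq_card_filter] at h
  exact ⟨h.1.symm, h.2.1.symm, h.2.2.symm⟩
end

section
/- Let α ≥ 0 be an integer, k = 4α + 9, and s = 2α + 4. For every odd integer j with 1 ≤ j ≤ 4α + 7, the quantity λ_j^{(s)} = 2·Σ_{h=1}^{s} cos(jhπ/k) satisfies: λ_j^{(s)} > 0 if (j−1)/2 is even, and λ_j^{(s)} < 0 if (j−1)/2 is odd. -/
open Real

lemma cos_sum_telescope (θ : ℝ) (s : ℕ) :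
    2 * Real.sin (θ / 2) * ∑ h ∈ Finset.Icc (1 : ℕ) s, Real.cos (h * θ) =
      Real.sin (((s : ℝ) + 1 / 2) * θ) - Real.sin (θ / 2) := by
  induction s with
  | zero =>
    rw [show (((0:ℕ):ℝ) + 1/2) * θ = θ/2 by push_cast; ring]
    simp
  | succ n ih =>
    rw [Finset.sum_Icc_succ_top (by norm_num)]
    have h : Real.sin (((n : ℝ) + 1 + 1 / 2) * θ) - Real.sin (((n : ℝ) + 1 / 2) * θ)
        = 2 * Real.sin (θ / 2) * Real.cos (((n : ℝ) + 1) * θ) := by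
      rw [Real.sin_sub_sin]; ring_nf
    push_cast
    linear_combination ih - h

theorem stmt10 (α k s : ℕ) (hk : k = 4 * α + 9) (hs : s = 2 * α + 4)
    (j : ℕ) (hodd : Odd j) (hj1 : 1 ≤ j) (hj : j ≤ 4 * α + 7) :
    (Even ((j - 1) / 2) →
      0 < 2 * ∑ h ∈ Finset.Icc (1 : ℕ) s, Real.cos ((j : ℝ) * h * π / k)) ∧
    (Odd ((j - 1) / 2) →
      2 * ∑ h ∈ Finset.Icc (1 : ℕ) s, Real.cos ((j : ℝ) * h * π / k) < 0) := by
  obtain ⟨m, hm⟩ := hodd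
  subst hk hs
  have hK : (0 : ℝ) < 4 * (α : ℝ) + 9 := by positivity
  set θ : ℝ := (j : ℝ) * π / (4 * (α : ℝ) + 9) with hθ
  have hsum : ∀ h : ℕ, Real.cos ((j : ℝ) * h * π / ((4 * α + 9 : ℕ) : ℝ))
      = Real.cos ((h : ℝ) * θ) := by
    intro h
    rw [hθ]
    push_cast
    congr 1
    ring
  have key := cos_sum_telescope θ (2 * α + 4)
  have hhalf : (((2 * α + 4 : ℕ) : ℝ) + 1 / 2) * θ = (j : ℝ) * π / 2 := by
    rw [hθ]; push_cast; field_simp; ring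
  rw [hhalf] at key
  have hjpi : (j : ℝ) * π / 2 = (m : ℝ) * π + π / 2 := by
    have : (j : ℝ) = 2 * m + 1 := by rw [hm]; push_cast; ring
    rw [this]; ring
  have hsin : Real.sin ((j : ℝ) * π / 2) = (-1) ^ m := by
    rw [hjpi, Real.sin_add_pi_div_two]
    have := Real.cos_nat_mul_pi_sub 0 m
    simpa using this
  rw [hsin] at key
  -- bounds on θ/2
  have hjlt : (j : ℝ) < 4 * (α : ℝ) + 9 := by
    have : (j : ℝ) ≤ 4 * (α : ℝ) + 7 := by exact_mod_cast hj
    linarith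
  have hjpos : (0 : ℝ) < (j : ℝ) := by exact_mod_cast hj1
  have hpos : 0 < θ / 2 := by
    rw [hθ]; positivity
  have hθπ : θ < π := by
    rw [hθ, div_lt_iff₀ (by linarith)]
    nlinarith [mul_pos (show (0:ℝ) < 4 * (α : ℝ) + 9 - j by linarith) pi_pos]
  have hlt : θ / 2 < π / 2 := by linarith
  have hA : 0 < Real.sin (θ / 2) :=
    Real.sin_pos_of_pos_of_lt_pi hpos (by linarith [pi_pos])
  have hcos : 0 < Real.cos (θ / 2) := Real.cos_pos_of_mem_Ioo ⟨by linarith, hlt⟩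
  have hA1 : Real.sin (θ / 2) < 1 := by
    nlinarith [Real.sin_sq_add_cos_sq (θ / 2)]
  have hdiv : (j - 1) / 2 = m := by omega
  rw [hdiv]
  constructor
  · intro he
    have h1 : ((-1 : ℝ)) ^ m = 1 := he.neg_one_pow
    rw [h1] at key
    have hS : ∑ h ∈ Finset.Icc (1 : ℕ) (2 * α + 4), Real.cos ((j : ℝ) * h * π / ((4 * α + 9 : ℕ) : ℝ))
        = ∑ h ∈ Finset.Icc (1 : ℕ) (2 * α + 4), Real.cos ((h : ℝ) * θ) :=
      Finset.sum_congr rfl fun h _ => hsum h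
    push_cast at hS ⊢
    rw [hS]
    nlinarith [key]
  · intro ho
    have h1 : ((-1 : ℝ)) ^ m = -1 := ho.neg_one_pow
    rw [h1] at key
    have hS : ∑ h ∈ Finset.Icc (1 : ℕ) (2 * α + 4), Real.cos ((j : ℝ) * h * π / ((4 * α + 9 : ℕ) : ℝ))
        = ∑ h ∈ Finset.Icc (1 : ℕ) (2 * α + 4), Real.cos ((h : ℝ) * θ) :=
      Finset.sum_congr rfl fun h _ => hsum h
    push_cast at hS ⊢
    rw [hS]
    nlinarith [key]
end

section
/- Let k ≥ 5 be an integer and let s, j be integers with 2 ≤ s ≤ (k−1)/2 and 0 ≤ j ≤ (k−1)/2. Then 2·Σ_{h=1}^{s} cos((2j+1)hπ/k) = 2·Σ_{h=1}^{k−s−1} cos((2j+1)hπ/k). In other words, the odd-indexed eigenvalues of the circulant graphs G(ℤ_{2k}, {1,…,s, 2k−s,…,2k−1}) and G(ℤ_{2k}, {1,…,k−s−1, 2k−(k−s−1),…,2k−1}) coincide: λ_{2j+1}^{(s)} = β_{2j+1}^{(k−s−1)}. -/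
open Real

lemma cos_refl (k j h : ℕ) (hk : 0 < k) (hh : h ≤ k) :
    Real.cos ((2 * j + 1 : ℝ) * ((k - h : ℕ) : ℝ) * π / k) =
      - Real.cos ((2 * j + 1 : ℝ) * h * π / k) := by
  have hk' : (k : ℝ) ≠ 0 := Nat.cast_ne_zero.mpr hk.ne'
  have hcast : ((k - h : ℕ) : ℝ) = (k : ℝ) - h := by
    push_cast [Nat.cast_sub hh]; ring
  rw [hcast]
  have heq : (2 * j + 1 : ℝ) * ((k : ℝ) - h) * π / k
      = (2 * π) * j + (π - (2 * j + 1 : ℝ) * h * π / k) := by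
    field_simp; ring
  have h1 : Real.cos ((2:ℝ) * π * j) = 1 := by
    have := Real.cos_nat_mul_two_pi j
    rw [← this]; ring_nf
  have h2 : Real.sin ((2:ℝ) * π * j) = 0 := by
    have := Real.sin_nat_mul_pi (2 * j)
    rw [← this]; push_cast; ring_nf
  rw [heq, Real.cos_add, Real.cos_sub, h1, h2]
  simp

lemma cos_mid (k j a : ℕ) (hka : k = 2 * a) (ha : 0 < a) :
    Real.cos ((2 * j + 1 : ℝ) * a * π / k) = 0 := by
  have ha' : (a : ℝ) ≠ 0 := Nat.cast_ne_zero.mpr ha.ne'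
  have heq : (2 * j + 1 : ℝ) * a * π / k = j * π + π / 2 := by
    subst hka; push_cast; field_simp
  rw [heq, Real.cos_add, Real.cos_pi_div_two, Real.sin_pi_div_two,
    Real.sin_nat_mul_pi]
  ring

theorem stmt11 (k s j : ℕ) (hk : 5 ≤ k) (hs2 : 2 ≤ s) (hsk : 2 * s ≤ k - 1)
    (hj : 2 * j ≤ k - 1) :
    2 * ∑ h ∈ Finset.Icc (1 : ℕ) s, Real.cos ((2 * j + 1 : ℝ) * h * π / k) =
      2 * ∑ h ∈ Finset.Icc (1 : ℕ) (k - s - 1), Real.cos ((2 * j + 1 : ℝ) * h * π / k) := by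
  have hk0 : 0 < k := by omega
  have hsplit : Finset.Icc (1:ℕ) (k - s - 1) = Finset.Icc 1 s ∪ Finset.Icc (s+1) (k-s-1) := by
    ext x; simp [Finset.mem_Icc, Finset.mem_union]; omega
  have hdisj : Disjoint (Finset.Icc (1:ℕ) s) (Finset.Icc (s+1) (k-s-1)) := by
    simp [Finset.disjoint_left]; omega
  rw [hsplit, Finset.sum_union hdisj]
  have hzero : ∑ h ∈ Finset.Icc (s+1) (k-s-1),
      Real.cos ((2 * j + 1 : ℝ) * h * π / k) = 0 := by
    apply Finset.sum_involution (g := fun a _ => k - a)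
    · intro a ha
      simp only [Finset.mem_Icc] at ha
      rw [cos_refl k j a hk0 (by omega)]; ring
    · intro a ha hfa
      simp only [Finset.mem_Icc] at ha
      intro hfix
      apply hfa
      have hka : k = 2 * a := by omega
      exact cos_mid k j a hka (by omega)
    · intro a ha
      simp only [Finset.mem_Icc] at ha ⊢
      omega
    · intro a ha
      simp only [Finset.mem_Icc] at ha
      omega
  rw [hzero]; ring
end

section
/- Let k ≥ 6 be an integer and let s be an integer with 2 ≤ s ≤ (k−1)/2. Then 2·Σ_{h=1}^{s} (−1)^h + 2·Σ_{h=1}^{s} cos(hπ/k) > 0; that is, λ_k^{(s)} + λ_1^{(s)} > 0, where λ_j^{(s)} = 2·Σ_{h=1}^{s} cos(jhπ/k) are the eigenvalues of the circulant graph G(ℤ_{2k}, {1,…,s, 2k−s,…,2k−1}). -/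
/-! The alternating sum `∑_{h=1}^s (-1)^h` is `0` or `-1`. Since `2s < k`, every angle `hπ/k`
with `h ≤ s` lies in `[0, π/2]`, so all cosines are nonnegative and the cosine sum is at least
`cos (π/k) + cos (2π/k)`; for `k ≥ 6` both angles are at most `π/3` and the first is strictly
smaller, so this exceeds `1/2 + 1/2 = 1`. -/

open Real Finset

theorem two_mul_sum_Icc_neg_one_pow {R : Type*} [Ring R] (s : ℕ) :
    2 * ∑ h ∈ Icc 1 s, (-1 : R) ^ h = (-1) ^ s - 1 := by
  induction s with
  | zero => simp
  | succ n ih =>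
    rw [sum_Icc_succ_top (by omega), mul_add, ih, pow_succ]
    noncomm_ring

theorem neg_one_le_sum_Icc_neg_one_pow {R : Type*} [CommRing R] [LinearOrder R]
    [IsStrictOrderedRing R] (s : ℕ) : -1 ≤ ∑ h ∈ Icc 1 s, (-1 : R) ^ h := by
  have h_sum := two_mul_sum_Icc_neg_one_pow (R := R) s
  rcases neg_one_pow_eq_or R s with hs | hs <;> rw [hs] at h_sum <;> linarith

theorem cos_natCast_mul_pi_div_nonneg {h k : ℕ} (hhk : 2 * h ≤ k) : 0 ≤ cos (h * π / k) := by
  rcases Nat.eq_zero_or_pos k with rfl | hk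
  · simp
  have hk' : (0 : ℝ) < k := by exact_mod_cast hk
  have hhk' : (2 * h : ℝ) ≤ k := by exact_mod_cast hhk
  apply cos_nonneg_of_mem_Icc
  constructor
  · linarith [pi_pos, show 0 ≤ h * π / k by positivity]
  · rw [div_le_iff₀ hk']
    nlinarith [pi_pos]

theorem one_lt_cos_pi_div_add_cos_two_mul_pi_div {k : ℝ} (hk : 6 ≤ k) :
    1 < cos (π / k) + cos (2 * π / k) := by
  have hk0 : 0 < k := by linarith
  have hlt : cos (2 * π / k) < cos (π / k) := by
    apply cos_lt_cos_of_nonneg_of_le_pi (by positivity)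
    · rw [div_le_iff₀ hk0]; nlinarith [pi_pos]
    · rw [div_lt_div_iff₀ hk0 hk0]; nlinarith [pi_pos]
  have hge : cos (π / 3) ≤ cos (2 * π / k) := by
    apply cos_le_cos_of_nonneg_of_le_pi (by positivity) (by linarith [pi_pos])
    rw [div_le_div_iff₀ hk0 (by norm_num)]; nlinarith [pi_pos]
  rw [cos_pi_div_three] at hge
  linarith

theorem one_lt_sum_Icc_cos_mul_pi_div {k s : ℕ} (hk : 6 ≤ k) (hs : 2 ≤ s) (hsk : 2 * s ≤ k) :
    1 < ∑ h ∈ Icc 1 s, cos ((h : ℝ) * π / k) := by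
  calc (1 : ℝ) < cos (π / k) + cos (2 * π / k) :=
        one_lt_cos_pi_div_add_cos_two_mul_pi_div (by exact_mod_cast hk)
    _ = ∑ h ∈ Icc (1 : ℕ) 2, cos ((h : ℝ) * π / k) := by
        rw [show Icc 1 2 = {1, 2} by rfl, sum_pair (by norm_num)]
        norm_num
    _ ≤ ∑ h ∈ Icc 1 s, cos ((h : ℝ) * π / k) := by
        refine sum_le_sum_of_subset_of_nonneg (Icc_subset_Icc le_rfl hs) fun h hh _ => ?_
        exact cos_natCast_mul_pi_div_nonneg (by rw [mem_Icc] at hh; omega)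

theorem stmt12 (k s : ℕ) (hk : 6 ≤ k) (hs2 : 2 ≤ s) (hsk : 2 * s ≤ k - 1) :
    0 < 2 * ∑ h ∈ Finset.Icc (1 : ℕ) s, ((-1 : ℝ)) ^ h +
        2 * ∑ h ∈ Finset.Icc (1 : ℕ) s, Real.cos ((h : ℝ) * π / k) := by
  have h_alternating := neg_one_le_sum_Icc_neg_one_pow (R := ℝ) s
  have h_cos := one_lt_sum_Icc_cos_mul_pi_div hk hs2 (by omega)
  linarith
end

section
/- Let k ≥ 6 be an integer and let s be an integer with 2 ≤ s ≤ (k−1)/2. Then (s/k)·(2k − 2s − 1) < 2·Σ_{h=1}^{s} cos(hπ/k) < (7s/(2k))·(k − s − 1/2). -/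
/-!
On `[0, π]` the cosine is squeezed between two parabolas, `1 - x²/2 ≤ cos x ≤ 1 - 2x²/π²`.
Summing them over `x = hπ/k`, `1 ≤ h ≤ s`, bounds `2 ∑ cos(hπ/k)` on both sides by
`2s - c · s(s+1)(2s+1)/k²` (with `c = π²/6` below and `c = 2/3` above), and the claimed bounds
reduce to polynomial inequalities in `s` and `k` that hold once `2s + 1 ≤ k` and `k ≥ 6`.
-/

open Real Finset

theorem sum_Icc_sq_mul_six {R : Type*} [CommSemiring R] (s : ℕ) :
    (∑ h ∈ Icc 1 s, (h : R) ^ 2) * 6 = s * (s + 1) * (2 * s + 1) := by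
  induction s with
  | zero => simp
  | succ n ih =>
    rw [sum_Icc_succ_top (by omega), add_mul, ih]
    push_cast
    ring

theorem two_mul_sum_cos_ge (k : ℝ) (s : ℕ) :
    2 * s - π ^ 2 * (s * (s + 1) * (2 * s + 1)) / (6 * k ^ 2) ≤
      2 * ∑ h ∈ Icc 1 s, cos (h * π / k) := by
  have hpoly : 2 * ∑ h ∈ Icc 1 s, (1 - (h * π / k) ^ 2 / 2) =
      2 * s - π ^ 2 * (s * (s + 1) * (2 * s + 1)) / (6 * k ^ 2) := by
    simp only [div_pow, mul_pow, sum_sub_distrib, sum_const, Nat.card_Icc, ← sum_div,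
      ← sum_mul, ← sum_Icc_sq_mul_six (R := ℝ),
      add_tsub_cancel_right, nsmul_eq_mul, mul_one]
    ring
  rw [← hpoly]
  gcongr
  exact one_sub_sq_div_two_le_cos

theorem two_mul_sum_cos_le (k : ℝ) (s : ℕ) (hsk : (s : ℝ) ≤ k) :
    2 * ∑ h ∈ Icc 1 s, cos (h * π / k) ≤
      2 * s - 2 * (s * (s + 1) * (2 * s + 1)) / (3 * k ^ 2) := by
  have hpoly : 2 * ∑ h ∈ Icc 1 s, (1 - 2 * (h : ℝ) ^ 2 / k ^ 2) =
      2 * s - 2 * (s * (s + 1) * (2 * s + 1)) / (3 * k ^ 2) := by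
    simp only [sum_sub_distrib, sum_const, Nat.card_Icc, ← sum_div, ← mul_sum,
      ← sum_Icc_sq_mul_six (R := ℝ),
      add_tsub_cancel_right, nsmul_eq_mul, mul_one]
    ring
  rw [← hpoly]
  gcongr with h hh
  have h1 : (1 : ℝ) ≤ h := by exact_mod_cast (mem_Icc.1 hh).1
  have hhk : (h : ℝ) ≤ k := le_trans (by exact_mod_cast (mem_Icc.1 hh).2) hsk
  have hk : 0 < k := by linarith
  have hx : |h * π / k| ≤ π := by
    rw [abs_of_nonneg (by positivity), div_le_iff₀ hk]
    nlinarith [pi_pos]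
  calc cos (h * π / k) ≤ 1 - 2 / π ^ 2 * (h * π / k) ^ 2 := cos_le_one_sub_mul_cos_sq hx
    _ = 1 - 2 * (h : ℝ) ^ 2 / k ^ 2 := by field_simp [pi_ne_zero]

theorem lt_parabola_lower_estimate (s k : ℝ) (hs : 0 < s) (hk : 6 ≤ k) (hsk : 2 * s + 1 ≤ k) :
    s / k * (2 * k - 2 * s - 1) < 2 * s - π ^ 2 * (s * (s + 1) * (2 * s + 1)) / (6 * k ^ 2) := by
  have hπ : π ^ 2 < 10 := by nlinarith [pi_lt_d2, pi_pos]
  have hgap : π ^ 2 * (s + 1) < 6 * k := by nlinarith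
  rw [← sub_pos]
  have hdiff : 2 * s - π ^ 2 * (s * (s + 1) * (2 * s + 1)) / (6 * k ^ 2) - s / k * (2 * k - 2 * s - 1)
      = s * (2 * s + 1) * (6 * k - π ^ 2 * (s + 1)) / (6 * k ^ 2) := by
    field_simp
    ring
  rw [hdiff]
  exact div_pos (mul_pos (by positivity) (sub_pos.2 hgap)) (by positivity)

theorem parabola_upper_estimate_lt (s k : ℝ) (hs : 0 < s) (hsk : 2 * s + 1 ≤ k) :
    2 * s - 2 * (s * (s + 1) * (2 * s + 1)) / (3 * k ^ 2) < 7 * s / (2 * k) * (k - s - 1 / 2) := by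
  rw [← sub_pos]
  set u := 2 * s + 1
  have hk : 0 < k := by linarith
  have hdiff : 7 * s / (2 * k) * (k - s - 1 / 2) - (2 * s - 2 * (s * (s + 1) * u) / (3 * k ^ 2))
      = s * ((k - u) * (18 * k - 3 * u) + u ^ 2 + 4 * u) / (12 * k ^ 2) := by
    field_simp
    ring
  rw [hdiff]
  have hu : 0 < u := by positivity
  exact div_pos (mul_pos hs (by nlinarith)) (by positivity)

theorem stmt13 (k s : ℕ) (hk : 6 ≤ k) (hs2 : 2 ≤ s) (hsk : 2 * s ≤ k - 1) :
    (s : ℝ) / k * (2 * k - 2 * s - 1) <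
        2 * ∑ h ∈ Finset.Icc (1 : ℕ) s, Real.cos ((h : ℝ) * π / k) ∧
      2 * ∑ h ∈ Finset.Icc (1 : ℕ) s, Real.cos ((h : ℝ) * π / k) <
        7 * (s : ℝ) / (2 * k) * ((k : ℝ) - s - 1 / 2) := by
  have hk' : (6 : ℝ) ≤ k := by exact_mod_cast hk
  have hs' : (0 : ℝ) < s := by exact_mod_cast (by omega : 0 < s)
  have hsk' : 2 * (s : ℝ) + 1 ≤ k := by exact_mod_cast (by omega : 2 * s + 1 ≤ k)
  exact ⟨(lt_parabola_lower_estimate s k hs' hk' hsk').trans_le (two_mul_sum_cos_ge k s),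
    (two_mul_sum_cos_le k s (by linarith)).trans_lt (parabola_upper_estimate_lt s k hs' hsk')⟩
end

section
/- Let n = 2k with k ≥ 6, let s be an integer with 2 ≤ s ≤ k−3, and let S1 = {1,…,s, n−s,…,n−1} and S2 = {k−s,…,k−1, k+1,…,k+s}. For 0 ≤ i ≤ ⌊(k−1)/2⌋ let λ_{2i+1} = 2·Σ_{h=1}^{s} cos((2i+1)hπ/k) and β_{2i+1} = (−1)·λ_{2i+1} denote the odd-indexed eigenvalues of G(ℤ_n, S1) and G(ℤ_n, S2) respectively. If the sets {λ_1, λ_3, …, λ_{2⌊(k−1)/2⌋+1}} and {β_1, β_3, …, β_{2⌊(k−1)/2⌋+1}} are distinct, then G(ℤ_n, S1) and G(ℤ_n, S2) are not cospectral: the multisets of eigenvalues (with multiplicity) of their adjacency matrices differ. -/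
open Polynomial Real

/-! The Fourier matrix `(ζ^{ij})`, `ζ = exp(2πi/n)`, diagonalises every circulant adjacency
matrix, so the spectrum of `G(ℤ_n, S)` is the multiset of character sums `∑_{v ∈ S} ζ^{mv}`,
`0 ≤ m < n`. For `S1` these are the numbers `λ_m`. Since `S2 = k + S1` and `ζ^{mk} = (-1)^m`,
the spectrum of `G(ℤ_n, S2)` is the multiset of the `(-1)^m λ_m`. The even-indexed eigenvalues
of the two graphs therefore coincide, so cospectrality forces the multisets `{λ_m : m odd}` and
`{-λ_m : m odd}` to agree; as `λ_{n-m} = λ_m`, each odd eigenvalue already occurs for an odd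
index `2i + 1 ≤ k`, contradicting the hypothesis on the two sets.
-/

open Finset

theorem Matrix.charpoly_eq_of_mul_eq_mul {m R : Type*} [Fintype m] [DecidableEq m] [CommRing R]
    {A D U V : Matrix m m R} (hUV : U * V = 1) (hAU : A * U = U * D) :
    A.charpoly = D.charpoly := by
  have hA : A = U * (D * V) := by
    rw [← Matrix.mul_assoc, ← hAU, Matrix.mul_assoc, hUV, Matrix.mul_one]
  rw [hA, Matrix.charpoly_mul_comm, Matrix.mul_assoc, mul_eq_one_comm.mp hUV,
    Matrix.mul_one]

theorem ZMod.map_natCast_range (n : ℕ) [NeZero n] :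
    (Multiset.range n).map (Nat.cast : ℕ → ZMod n) = (univ : Finset (ZMod n)).val := by
  refine (Multiset.Nodup.ext ?_ univ.nodup).mpr fun x => ?_
  · refine (Multiset.nodup_range n).map_on fun a ha b hb hab => ?_
    rw [Multiset.mem_range] at ha hb
    simpa [Nat.mod_eq_of_lt, ha, hb] using congrArg ZMod.val hab
  · simpa using ⟨x.val, ZMod.val_lt x, ZMod.natCast_zmod_val x⟩

theorem Multiset.map_filter_odd_eq_of_map_eq_neg_one_pow_mul {R : Type*} [Ring R] (s : Multiset ℕ)
    (f : ℕ → R) (h : s.map f = s.map fun m => (-1) ^ m * f m) :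
    (s.filter Odd).map f = (s.filter Odd).map fun m => -f m := by
  have heven : (s.filter (¬Odd ·)).map (fun m => (-1) ^ m * f m) = (s.filter (¬Odd ·)).map f :=
    Multiset.map_congr rfl fun m hm => by
      rw [(Nat.not_odd_iff_even.mp (Multiset.mem_filter.mp hm).2).neg_one_pow, one_mul]
  have hodd : (s.filter Odd).map (fun m => (-1) ^ m * f m) = (s.filter Odd).map fun m => -f m :=
    Multiset.map_congr rfl fun m hm => by
      rw [(Multiset.of_mem_filter hm).neg_one_pow, neg_one_mul]
  rw [← Multiset.filter_add_not Odd s, Multiset.map_add, Multiset.map_add, heven, hodd] at h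
  exact add_right_cancel h

theorem Multiset.filter_odd_range_two_mul (k : ℕ) :
    (Multiset.range (2 * k)).filter Odd = (Multiset.range k).map (2 * · + 1) := by
  refine (Multiset.Nodup.ext ((Multiset.nodup_range _).filter _)
    ((Multiset.nodup_range k).map fun a b hab => by omega)).mpr fun m => ?_
  simp only [Multiset.mem_filter, Multiset.mem_range, Multiset.mem_map]
  constructor
  · rintro ⟨hm, i, rfl⟩
    exact ⟨i, by omega, by ring⟩
  · rintro ⟨i, hi, rfl⟩
    exact ⟨by omega, i, by ring⟩

theorem Finset.image_range_eq_image_range_half {α : Type*} [DecidableEq α] {k : ℕ} (hk : 0 < k)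
    (f : ℕ → α) (hf : ∀ i < k, f (k - 1 - i) = f i) :
    (range k).image f = (range ((k - 1) / 2 + 1)).image f := by
  refine Subset.antisymm (fun x hx => ?_) <|
    image_subset_image fun i hi => by simp only [mem_range] at hi ⊢; omega
  obtain ⟨i, hi, rfl⟩ := mem_image.mp hx
  rw [mem_range] at hi
  by_cases hlow : i < (k - 1) / 2 + 1
  · exact mem_image_of_mem f (mem_range.mpr hlow)
  · exact mem_image.mpr ⟨k - 1 - i, mem_range.mpr (by omega), hf i hi⟩

theorem Real.cos_two_mul_sub_mul_pi_div {k t : ℕ} (hk : k ≠ 0) (ht : t ≤ 2 * k) (h : ℕ) :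
    Real.cos (((2 * k - t : ℕ) : ℝ) * h * π / k) = Real.cos (t * h * π / k) := by
  have harg : ((2 * k - t : ℕ) : ℝ) * h * π / k = h * (2 * π) - t * h * π / k := by
    rw [Nat.cast_sub ht]
    field_simp
    push_cast
    ring
  rw [harg, Real.cos_nat_mul_two_pi_sub]

namespace Circulant

variable {n : ℕ} [NeZero n]

noncomputable def fourierMatrix : Matrix (ZMod n) (ZMod n) ℂ :=
  .of fun i j => ZMod.stdAddChar (i * j)

noncomputable def conjFourierMatrix : Matrix (ZMod n) (ZMod n) ℂ :=
  .of fun i j => ZMod.stdAddChar (-(i * j))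

noncomputable def charSum (S : Finset (ZMod n)) (j : ZMod n) : ℂ :=
  ∑ v ∈ S, ZMod.stdAddChar (j * v)

theorem fourierMatrix_mul_conjFourierMatrix :
    fourierMatrix * conjFourierMatrix = (n : ℂ) • (1 : Matrix (ZMod n) (ZMod n) ℂ) := by
  ext i j
  simp only [Matrix.mul_apply, fourierMatrix, conjFourierMatrix, Matrix.of_apply,
    ← AddChar.map_add_eq_mul]
  have hsum := AddChar.sum_mulShift (i - j) (ZMod.isPrimitive_stdAddChar n)
  simp only [ZMod.card, sub_eq_zero] at hsum
  rw [Matrix.smul_apply, Matrix.one_apply]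
  convert hsum using 1
  · exact Finset.sum_congr rfl fun l _ => by ring_nf
  · split_ifs <;> simp

theorem circAdj_map_mul_fourierMatrix (S : Finset (ZMod n)) :
    (circAdj n S).map Complex.ofRealHom * fourierMatrix =
      fourierMatrix * Matrix.diagonal (charSum S) := by
  ext i j
  rw [Matrix.mul_diagonal, Matrix.mul_apply]
  simp only [circAdj, fourierMatrix, charSum, Matrix.map_apply, Matrix.of_apply]
  rw [← Equiv.sum_comp (Equiv.addLeft i), mul_sum, ← sum_subset (subset_univ S)]
  · refine sum_congr rfl fun v hv => ?_
    simp only [Equiv.coe_addLeft, add_sub_cancel_left, hv, ← AddChar.map_add_eq_mul]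
    simp [mul_add, mul_comm]
  · intro v _ hv
    simp [hv]

theorem circSpectrum_eq_map_range (S : Finset (ZMod n)) (L : ℕ → ℝ)
    (hL : ∀ m : ℕ, charSum S m = L m) :
    circSpectrum n S = (Multiset.range n).map L := by
  have hn : (n : ℂ) ≠ 0 := Nat.cast_ne_zero.mpr (NeZero.ne n)
  have hinv : fourierMatrix * ((n : ℂ)⁻¹ • conjFourierMatrix (n := n)) = 1 := by
    rw [Matrix.mul_smul, fourierMatrix_mul_conjFourierMatrix, smul_smul, inv_mul_cancel₀ hn,
      one_smul]
  have hcharpoly : (circAdj n S).charpoly.map Complex.ofRealHom =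
      (((Multiset.range n).map L).map fun a => X - C a).prod.map Complex.ofRealHom := by
    rw [← Matrix.charpoly_map, Matrix.charpoly_eq_of_mul_eq_mul hinv
      (circAdj_map_mul_fourierMatrix S), Matrix.charpoly_diagonal, Finset.prod_eq_multiset_prod,
      ← ZMod.map_natCast_range, Multiset.map_map, Polynomial.map_multiset_prod, Multiset.map_map,
      Multiset.map_map]
    congr 1
    refine Multiset.map_congr rfl fun m _ => ?_
    simp [hL]
  rw [circSpectrum, Polynomial.map_injective _ Complex.ofReal_injective hcharpoly,
    roots_multiset_prod_X_sub_C]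

theorem charSum_image_add (S : Finset (ZMod n)) (a j : ZMod n) :
    charSum (S.image (a + ·)) j = ZMod.stdAddChar (j * a) * charSum S j := by
  rw [charSum, charSum, sum_image fun x _ y _ h => add_left_cancel h, mul_sum]
  simp only [mul_add, AddChar.map_add_eq_mul]

theorem charSum_image_natCast (A : Finset ℕ) (hA : ∀ a ∈ A, a < n) (m : ℕ) :
    charSum (A.image (Nat.cast : ℕ → ZMod n)) m =
      ∑ a ∈ A, Complex.exp (2 * π * Complex.I * (m * a : ℕ) / n) := by
  rw [charSum, sum_image]
  · refine sum_congr rfl fun a _ => ?_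
    rw [← Nat.cast_mul, ZMod.stdAddChar_apply, ZMod.toCircle_natCast]
  · intro a ha b hb hab
    simpa [Nat.mod_eq_of_lt, hA a ha, hA b hb] using congrArg ZMod.val hab

def symmInterval (n s : ℕ) : Finset (ZMod n) :=
  ((Icc 1 s).image fun h : ℕ => (h : ZMod n)) ∪
    ((Icc (n - s) (n - 1)).image fun h : ℕ => (h : ZMod n))

theorem charSum_symmInterval {s : ℕ} (hs : 2 * s < n) (m : ℕ) :
    charSum (symmInterval n s) m = ↑(2 * ∑ h ∈ Icc 1 s, Real.cos (2 * π * m * h / n)) := by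
  have hdisj : Disjoint (Icc 1 s) (Icc (n - s) (n - 1)) :=
    disjoint_left.mpr fun a ha ha' => by simp only [mem_Icc] at ha ha'; omega
  have hreflect :
      ∑ a ∈ Icc (n - s) (n - 1), Complex.exp (2 * π * Complex.I * (m * a : ℕ) / n) =
        ∑ h ∈ Icc 1 s, Complex.exp (-(2 * π * m * h / n : ℝ) * Complex.I) := by
    refine sum_nbij' (n - ·) (n - ·) ?_ ?_ ?_ ?_ fun a ha => ?_
    iterate 4 (intro a ha; simp only [mem_Icc] at ha ⊢; omega)
    have ha : a ≤ n := by simp only [mem_Icc] at ha; omega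
    have hn : (n : ℂ) ≠ 0 := Nat.cast_ne_zero.mpr (NeZero.ne n)
    have harg : (-(2 * π * m * (n - a : ℕ) / n : ℝ) : ℂ) * Complex.I =
        2 * π * Complex.I * (m * a : ℕ) / n - m * (2 * π * Complex.I) := by
      push_cast [Nat.cast_sub ha]
      field_simp
      ring
    rw [harg, Complex.exp_sub, Complex.exp_nat_mul_two_pi_mul_I, div_one]
  have hlt : ∀ a ∈ Icc 1 s ∪ Icc (n - s) (n - 1), a < n := fun a ha => by
    simp only [mem_union, mem_Icc] at ha; omega
  rw [symmInterval, ← image_union, charSum_image_natCast _ hlt, sum_union hdisj, hreflect,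
    mul_sum, ← sum_add_distrib]
  push_cast
  refine sum_congr rfl fun h _ => ?_
  rw [Complex.two_cos]
  congr 2
  ring

theorem symmInterval_image_add_half {k s : ℕ} (hs : s ≤ k) :
    (symmInterval (2 * k) s).image ((k : ZMod (2 * k)) + ·) =
      ((Icc (k - s) (k - 1)).image fun h : ℕ => (h : ZMod (2 * k))) ∪
        ((Icc (k + 1) (k + s)).image fun h : ℕ => (h : ZMod (2 * k))) := by
  have hlow : Icc (2 * k - s) (2 * k - 1) = (Icc (k - s) (k - 1)).image (· + k) := by
    rw [image_add_right_Icc]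
    congr 1 <;> omega
  have hhigh : Icc (k + 1) (k + s) = (Icc 1 s).image (· + k) := by
    rw [image_add_right_Icc, add_comm 1, add_comm s]
  rw [symmInterval, image_union, union_comm, hlow, hhigh, image_image, image_image, image_image,
    image_image]
  congr 1 <;> apply image_congr <;> intro h _
  · simp only [Function.comp_apply, Nat.cast_add]
    rw [add_left_comm, ← Nat.cast_add, ← two_mul, ZMod.natCast_self, add_zero]
  · simp only [Function.comp_apply, Nat.cast_add]
    ring

theorem stdAddChar_natCast_mul_half {k : ℕ} [NeZero (2 * k)] (m : ℕ) :
    ZMod.stdAddChar ((m : ZMod (2 * k)) * (k : ZMod (2 * k))) = (-1) ^ m := by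
  have hk : (k : ℂ) ≠ 0 := by
    have := NeZero.ne (2 * k)
    exact_mod_cast (by omega : k ≠ 0)
  rw [← Nat.cast_mul, ZMod.stdAddChar_apply, ZMod.toCircle_natCast, ← Complex.exp_pi_mul_I,
    ← Complex.exp_nat_mul]
  congr 1
  push_cast
  field_simp

end Circulant

open Circulant

theorem stmt14_general (k s n : ℕ) [NeZero n] (hn : n = 2 * k)
    (hsk : s ≤ k - 3)
    (S1 S2 : Finset (ZMod n))
    (hS1 : S1 = ((Finset.Icc 1 s).image fun h : ℕ => (h : ZMod n)) ∪
                ((Finset.Icc (n - s) (n - 1)).image fun h : ℕ => (h : ZMod n)))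
    (hS2 : S2 = ((Finset.Icc (k - s) (k - 1)).image fun h : ℕ => (h : ZMod n)) ∪
                ((Finset.Icc (k + 1) (k + s)).image fun h : ℕ => (h : ZMod n)))
    (lam beta : ℕ → ℝ)
    (hlam : ∀ j : ℕ, lam j = 2 * ∑ h ∈ Finset.Icc (1 : ℕ) s, Real.cos ((j : ℝ) * h * π / k))
    (hbeta : ∀ j : ℕ, beta j = -lam j)
    (hdist : (Finset.range ((k - 1) / 2 + 1)).image (fun i => lam (2 * i + 1)) ≠
             (Finset.range ((k - 1) / 2 + 1)).image (fun i => beta (2 * i + 1))) :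
    circSpectrum n S1 ≠ circSpectrum n S2 := by
  subst hn hS1 hS2
  have hk : k ≠ 0 := by have := NeZero.ne (2 * k); omega
  have hcharSum : ∀ m : ℕ, charSum (symmInterval (2 * k) s) m = lam m := fun m => by
    rw [charSum_symmInterval (by omega), hlam]
    congr 2
    refine sum_congr rfl fun h _ => congrArg Real.cos ?_
    push_cast
    field_simp
  have hspec1 := circSpectrum_eq_map_range _ lam hcharSum
  have hspec2 : circSpectrum (2 * k) ((symmInterval (2 * k) s).image ((k : ZMod (2 * k)) + ·)) =
      (Multiset.range (2 * k)).map fun m => (-1) ^ m * lam m := by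
    refine circSpectrum_eq_map_range _ _ fun m => ?_
    rw [charSum_image_add, hcharSum, stdAddChar_natCast_mul_half]
    push_cast
    ring
  rw [← symmInterval_image_add_half (by omega)]
  intro hspec
  have hodd := Multiset.map_filter_odd_eq_of_map_eq_neg_one_pow_mul _ lam
    ((hspec1.symm.trans hspec).trans hspec2)
  rw [Multiset.filter_odd_range_two_mul, Multiset.map_map, Multiset.map_map] at hodd
  have hsymm : ∀ i < k, lam (2 * (k - 1 - i) + 1) = lam (2 * i + 1) := fun i hi => by
    rw [hlam, hlam, show 2 * (k - 1 - i) + 1 = 2 * k - (2 * i + 1) by omega]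
    simp only [Real.cos_two_mul_sub_mul_pi_div hk (by omega : 2 * i + 1 ≤ 2 * k)]
  apply hdist
  rw [← image_range_eq_image_range_half (Nat.pos_of_ne_zero hk) _ hsymm,
    ← image_range_eq_image_range_half (Nat.pos_of_ne_zero hk) _ fun i hi => by
      simp only [hbeta, hsymm i hi]]
  simp only [hbeta]
  exact congrArg Multiset.toFinset hodd

theorem stmt14 (k s n : ℕ) [NeZero n] (hk : 6 ≤ k) (hn : n = 2 * k)
    (hs2 : 2 ≤ s) (hsk : s ≤ k - 3)
    (S1 S2 : Finset (ZMod n))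
    (hS1 : S1 = ((Finset.Icc 1 s).image fun h : ℕ => (h : ZMod n)) ∪
                ((Finset.Icc (n - s) (n - 1)).image fun h : ℕ => (h : ZMod n)))
    (hS2 : S2 = ((Finset.Icc (k - s) (k - 1)).image fun h : ℕ => (h : ZMod n)) ∪
                ((Finset.Icc (k + 1) (k + s)).image fun h : ℕ => (h : ZMod n)))
    (lam beta : ℕ → ℝ)
    (hlam : ∀ j : ℕ, lam j = 2 * ∑ h ∈ Finset.Icc (1 : ℕ) s, Real.cos ((j : ℝ) * h * π / k))
    (hbeta : ∀ j : ℕ, beta j = -lam j)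
    (hdist : (Finset.range ((k - 1) / 2 + 1)).image (fun i => lam (2 * i + 1)) ≠
             (Finset.range ((k - 1) / 2 + 1)).image (fun i => beta (2 * i + 1))) :
    circSpectrum n S1 ≠ circSpectrum n S2 :=
  stmt14_general k s n hn hsk S1 S2 hS1 hS2 lam beta hlam hbeta hdist
end

section
/- Let k and s be integers with s ≥ 2, let n = 2k, and let j be an integer with 2 ≤ j ≤ k−1. Then U_{2s}(cos(jπ/n)) ≥ −(s+1)/2. -/
/-!
Since `U_n(cos θ) · sin θ = sin((n + 1) θ)`, the bound amounts to
`-sin(m θ) ≤ (m + 1)/4 · sin θ` for `m ≥ 5` and `0 ≤ θ ≤ π/2`. This is trivial when the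
right side is at least `1`; otherwise `θ ≤ 3/4`, where `sin θ ≥ 9θ/10`, and it reduces to
the one-variable inequality `-sin x ≤ 9x/40` for `x ≥ 0`.
-/

open Polynomial Real

namespace Real

theorem neg_sin_le_mul {x : ℝ} (hx : 0 ≤ x) : -sin x ≤ 9 / 40 * x := by
  have hπ₁ := pi_gt_d6
  have hπ₂ := pi_lt_d6
  rcases le_or_gt x π with hxπ | hπx
  · linarith [sin_nonneg_of_nonneg_of_le_pi hx hxπ]
  rcases le_or_gt (40 / 9) x with hbig | hx₁
  · linarith [neg_one_le_sin x]
  rcases le_or_gt x (15 / 4) with hx₂ | hx₂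
  · linarith [sin_le (by linarith : 0 ≤ x - π), sin_sub_pi x]
  -- the minimum of `sin x + 9/40 * x` lies here, where a Taylor bound for `cos` is sharp enough
  set w := 3 * π / 2 - x with hw
  have hcos : -sin x = cos w := by
    rw [← sin_sub_pi, ← cos_pi_div_two_sub, hw]; ring_nf
  have hw₀ : 0 ≤ w := by linarith
  have hw₁ : w ≤ 1 := by linarith
  have hbound := (abs_le.1 (cos_bound (abs_le.2 ⟨by linarith, hw₁⟩))).2
  rw [abs_of_nonneg hw₀] at hbound
  have hw4 : w ^ 4 ≤ w ^ 2 := pow_le_pow_of_le_one hw₀ hw₁ (by norm_num)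
  nlinarith [sq_nonneg (w - 9 / 40)]

theorem mul_le_sin_of_le {t : ℝ} (ht₀ : 0 ≤ t) (ht : t ≤ 3 / 4) : 9 / 10 * t ≤ sin t := by
  nlinarith [sin_ge_sub_cube ht₀, mul_le_mul ht ht ht₀ (by norm_num : (0:ℝ) ≤ 3 / 4)]

theorem neg_sin_mul_le {m t : ℝ} (hm : 5 ≤ m) (ht₀ : 0 ≤ t) (ht : t ≤ π / 2) :
    -sin (m * t) ≤ (m + 1) / 4 * sin t := by
  rcases le_or_gt 1 ((m + 1) / 4 * sin t) with hbig | hsmall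
  · linarith [neg_one_le_sin (m * t)]
  have ht₁ : t ≤ 3 / 4 := by
    by_contra! h
    have := sin_le_sin_of_le_of_le_pi_div_two (by linarith [pi_pos]) ht h.le
    nlinarith [mul_le_sin_of_le (by norm_num : (0:ℝ) ≤ 3 / 4) le_rfl]
  calc -sin (m * t) ≤ 9 / 40 * (m * t) := neg_sin_le_mul (by positivity)
    _ ≤ (m + 1) / 4 * (9 / 10 * t) := by nlinarith
    _ ≤ (m + 1) / 4 * sin t := by gcongr; exact mul_le_sin_of_le ht₀ ht₁

end Real

namespace Polynomial.Chebyshev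

theorem neg_le_U_real_cos {n : ℤ} (hn : 4 ≤ n) {θ : ℝ} (hθ₀ : 0 < θ)
    (hθ : θ ≤ π / 2) : -(((n : ℝ) + 2) / 4) ≤ (U ℝ n).eval (cos θ) := by
  have hsin : 0 < sin θ := sin_pos_of_pos_of_lt_pi hθ₀ (by linarith [pi_pos])
  have hn' : (4 : ℝ) ≤ n := by exact_mod_cast hn
  have h := neg_sin_mul_le (m := n + 1) (by linarith) hθ₀.le hθ
  rw [← U_real_cos] at h
  refine le_of_mul_le_mul_right ?_ hsin
  linarith

end Polynomial.Chebyshev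

theorem stmt15 (k s n j : ℕ) (hs : 2 ≤ s) (hn : n = 2 * k)
    (hj2 : 2 ≤ j) (hjk : j ≤ k - 1) :
    (Chebyshev.U ℝ (2 * (s : ℤ))).eval (Real.cos ((j : ℝ) * π / n)) ≥
      -(((s : ℝ) + 1) / 2) := by
  have hj : (2 : ℝ) ≤ j := by exact_mod_cast hj2
  have hjk' : (j : ℝ) + 1 ≤ k := by exact_mod_cast (by omega : j + 1 ≤ k)
  have hn' : (n : ℝ) = 2 * k := by exact_mod_cast hn
  have hk : (0 : ℝ) < k := by linarith
  have hθ₀ : 0 < (j : ℝ) * π / n := by rw [hn']; positivity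
  have hθ : (j : ℝ) * π / n ≤ π / 2 := by
    rw [hn', div_le_div_iff₀ (by positivity) two_pos]
    nlinarith [pi_pos]
  have h := Chebyshev.neg_le_U_real_cos (n := 2 * s) (by omega) hθ₀ hθ
  push_cast at h
  linarith
end

section
/- Let k ≥ 6 be an integer and let s, i be integers with 2 ≤ s ≤ k−3 and 1 ≤ i ≤ ⌊(k−1)/2⌋. Then 2·Σ_{h=1}^{s} cos(hπ/k) + 2·Σ_{h=1}^{s} cos((2i+1)hπ/k) > 0; that is, λ_1^{(s)} + λ_{2i+1}^{(s)} > 0 for the eigenvalues of the circulant graph G(ℤ_{2k}, {1,…,s, 2k−s,…,2k−1}). -/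
/-!
With `α = π / (2k)`, the Dirichlet kernel turns both eigenvalues into quotients:
`λ_j = sin ((2s+1) j α) / sin (j α) - 1`. Reflecting `2s+1 ↦ 2k - (2s+1)` changes neither
quotient for odd `j`, so the multiplier `m` of `α` may be taken with `5 ≤ m` and `m α ≤ π / 2`.
Then `sin (m α) / sin α ≥ 2 + √3`, which settles the case `sin (m j α) ≥ 0`. Otherwise
`m j α > π`, and the negative second quotient (at least `-1 / sin (j α)`) is beaten by the
first one, using `sin (j α) ≥ sin (π / 5)` when `j α ≥ π / 5`, and the concavity bounds
`sin (j α) ≥ (5 / π) sin (π / 5) j α`, `sin (m α) ≥ sin (π / j) ≥ 3√3 / (2j)` when `j α < π / 5`.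
-/

open Real Finset

lemma sin_mul_one_add_two_sum_cos (β : ℝ) (s : ℕ) :
    sin β * (1 + 2 * ∑ h ∈ Icc 1 s, cos (2 * h * β)) = sin ((2 * s + 1) * β) := by
  induction s with
  | zero => simp
  | succ n ih =>
    rw [sum_Icc_succ_top (by omega), mul_add 2, ← add_assoc, mul_add, ih, mul_left_comm,
      ← mul_assoc, two_mul_sin_mul_cos,
      show β - 2 * (n + 1 : ℕ) * β = -((2 * n + 1) * β) by push_cast; ring, sin_neg]
    push_cast
    ring_nf

lemma two_mul_sum_cos_eq_sin_div_sin_sub_one {β : ℝ} (hβ : sin β ≠ 0) (s : ℕ) :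
    2 * ∑ h ∈ Icc 1 s, cos (2 * h * β) = sin ((2 * s + 1) * β) / sin β - 1 := by
  rw [eq_sub_iff_add_eq, eq_div_iff hβ, ← sin_mul_one_add_two_sum_cos]
  ring

lemma sin_nat_mul_pi_sub_of_odd {j : ℕ} (hj : Odd j) (x : ℝ) : sin (j * π - x) = sin x := by
  rw [sin_nat_mul_pi_sub, hj.neg_one_pow]
  ring

lemma exists_sin_mul_odd_eq {k M : ℝ} (hk : 0 < k) (hM5 : 5 ≤ M) (hM : M ≤ 2 * k - 5) :
    ∃ m : ℝ, 5 ≤ m ∧ m * (π / (2 * k)) ≤ π / 2 ∧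
      ∀ j : ℕ, Odd j → sin (M * (j * (π / (2 * k)))) = sin (m * (j * (π / (2 * k)))) := by
  have hα : 0 < π / (2 * k) := by positivity
  have hkα : k * (π / (2 * k)) = π / 2 := by field_simp
  rcases le_total M k with hMk | hkM
  · exact ⟨M, hM5, hkα ▸ mul_le_mul_of_nonneg_right hMk hα.le, fun _ _ ↦ rfl⟩
  refine ⟨2 * k - M, by linarith, by nlinarith, fun j hj ↦ ?_⟩
  rw [show (2 * k - M) * (j * (π / (2 * k))) = j * π - M * (j * (π / (2 * k))) by
    field_simp, sin_nat_mul_pi_sub_of_odd hj]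

lemma mul_sin_le_mul_sin {y a : ℝ} (hy : 0 ≤ y) (hya : y ≤ a) (ha : a ≤ π) :
    y * sin a ≤ a * sin y := by
  rcases hy.eq_or_lt with rfl | hy
  · simp
  have ha0 : 0 < a := hy.trans_le hya
  have := strictConcaveOn_sin_Icc.concaveOn.2 ⟨le_rfl, pi_pos.le⟩ ⟨ha0.le, ha⟩
    (div_nonneg (sub_nonneg.2 hya) ha0.le) (div_nonneg hy.le ha0.le) (by field_simp; ring)
  simp only [sin_zero, smul_eq_mul, mul_zero, zero_add] at this
  rw [div_mul_cancel₀ _ ha0.ne', div_mul_eq_mul_div, div_le_iff₀ ha0] at this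
  linarith

lemma sqrt_three_mul_sin_le_sin_mul_sub {α m : ℝ} (hα : 0 ≤ α) (hα12 : α ≤ π / 12)
    (hm5 : 5 ≤ m) (hmα : m * α ≤ π / 2) :
    √3 * sin α ≤ sin (m * α) - 2 * sin α := by
  have h5 := sin_mul_one_add_two_sum_cos α 2
  rw [show Icc 1 2 = {1, 2} by rfl, sum_pair (by norm_num),
    show cos (2 * (2 : ℕ) * α) = 2 * cos (2 * α) ^ 2 - 1 by rw [← cos_two_mul]; push_cast; ring_nf]
    at h5
  norm_num at h5
  have hd : √3 / 2 ≤ cos (2 * α) := by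
    rw [← cos_pi_div_six]
    exact cos_le_cos_of_nonneg_of_le_pi (by positivity) (by linarith [pi_pos]) (by linarith)
  have hd0 : 0 ≤ 4 * cos (2 * α) + 2 + 2 * √3 := by linarith [sqrt_nonneg 3]
  have hsin : 0 ≤ sin α := sin_nonneg_of_nonneg_of_le_pi hα (by linarith [pi_pos])
  have h5m : sin (5 * α) ≤ sin (m * α) :=
    sin_le_sin_of_le_of_le_pi_div_two (by linarith [pi_pos]) hmα (by nlinarith)
  -- `sin (5α) / sin α - 2 = 4 cos² (2α) + 2 cos (2α) - 3`, which is `√3` at `α = π / 12`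
  nlinarith [sq_sqrt (show (0 : ℝ) ≤ 3 by norm_num),
    mul_nonneg hsin (mul_nonneg (sub_nonneg.2 hd) hd0)]

lemma one_lt_sqrt_three_mul_sin_pi_div_five : 1 < √3 * sin (π / 5) := by
  have hsq : sin (π / 5) ^ 2 = (10 - 2 * √5) / 16 := by
    rw [sin_sq, cos_pi_div_five]; ring_nf; rw [sq_sqrt (by norm_num)]; ring
  have h5 : √5 < 7 / 3 := by rw [sqrt_lt' (by norm_num)]; norm_num
  have hpos : 0 < √3 * sin (π / 5) :=
    mul_pos (by positivity) (sin_pos_of_pos_of_lt_pi (by positivity) (by linarith [pi_pos]))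
  nlinarith [sq_sqrt (show (0 : ℝ) ≤ 3 by norm_num), mul_pow √3 (sin (π / 5)) 2]

lemma pi_div_five_lt_sin_pi_div_five_mul {x : ℝ} (hx : x < π / 5) :
    π / 5 < sin (π / 5) * (3 * √3 / 2 - 2 * x) := by
  have hσ := one_lt_sqrt_three_mul_sin_pi_div_five
  have hr : 1.732 < √3 := by rw [lt_sqrt (by norm_num)]; norm_num
  have hσ0 : 0 ≤ sin (π / 5) := sin_nonneg_of_nonneg_of_le_pi (by positivity) (by linarith [pi_pos])
  nlinarith [pi_lt_d2, mul_le_mul_of_nonneg_left hx.le hσ0]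

section

variable {α m j : ℝ}

lemma sin_lt_sin_mul_mul_sin_sub (hα : 0 < α) (hα12 : α ≤ π / 12) (hm5 : 5 ≤ m)
    (hmα : m * α ≤ π / 2) (hj3 : 3 ≤ j) (hjα : j * α ≤ π / 2) (hπ : π < m * (j * α)) :
    sin α < sin (j * α) * (sin (m * α) - 2 * sin α) := by
  have hP := sqrt_three_mul_sin_le_sin_mul_sub hα.le hα12 hm5 hmα
  have ht : 0 < sin α := sin_pos_of_pos_of_lt_pi hα (by linarith [pi_pos])
  have hB : 0 < sin (j * α) := sin_pos_of_pos_of_lt_pi (by positivity) (by linarith [pi_pos])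
  rcases le_or_gt (π / 5) (j * α) with hx | hx
  · have hσB : sin (π / 5) ≤ sin (j * α) :=
      sin_le_sin_of_le_of_le_pi_div_two (by linarith [pi_pos]) hjα hx
    calc sin α < √3 * sin (π / 5) * sin α := by
          nlinarith [one_lt_sqrt_three_mul_sin_pi_div_five]
      _ = sin (π / 5) * (√3 * sin α) := by ring
      _ ≤ sin (j * α) * (sin (m * α) - 2 * sin α) := by gcongr
  · have hj0 : 0 < j := by linarith
    have hBx : j * α * sin (π / 5) ≤ π / 5 * sin (j * α) :=
      mul_sin_le_mul_sin (by positivity) hx.le (by linarith [pi_pos])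
    have hPj : 3 * √3 / 2 ≤ j * sin (m * α) := by
      have hy : π / j ≤ π / 3 := div_le_div_of_nonneg_left pi_pos.le (by norm_num) hj3
      have hPy : sin (π / j) ≤ sin (m * α) :=
        sin_le_sin_of_le_of_le_pi_div_two (by linarith [pi_pos, div_pos pi_pos hj0]) hmα
          (by rw [div_le_iff₀ hj0]; linarith)
      have := mul_sin_le_mul_sin (div_pos pi_pos hj0).le hy (by linarith [pi_pos])
      rw [sin_pi_div_three] at this
      field_simp at this
      nlinarith
    have hconst := pi_div_five_lt_sin_pi_div_five_mul hx
    have htα : sin α ≤ α := sin_le hα.le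
    have hr : 0 < 3 * √3 / 2 - 2 * (j * α) := by
      nlinarith [pi_lt_d2, (show 1.7 < √3 by rw [lt_sqrt (by norm_num)]; norm_num)]
    have key : π / 5 * j * sin α < π / 5 * j * (sin (j * α) * (sin (m * α) - 2 * sin α)) := by
      calc π / 5 * j * sin α
          ≤ j * α * (π / 5) := by
            nlinarith [mul_le_mul_of_nonneg_left htα (by positivity : (0:ℝ) ≤ π / 5 * j)]
        _ < j * α * (sin (π / 5) * (3 * √3 / 2 - 2 * (j * α))) := by gcongr
        _ = j * α * sin (π / 5) * (3 * √3 / 2 - 2 * (j * α)) := by ring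
        _ ≤ π / 5 * sin (j * α) * (3 * √3 / 2 - 2 * (j * α)) := by gcongr
        _ ≤ π / 5 * sin (j * α) * (j * sin (m * α) - 2 * (j * α)) := by gcongr
        _ ≤ π / 5 * j * (sin (j * α) * (sin (m * α) - 2 * sin α)) := by
            nlinarith [mul_le_mul_of_nonneg_left htα (by positivity : 0 ≤ π / 5 * sin (j * α) * j)]
    exact lt_of_mul_lt_mul_left key (by positivity)

lemma two_lt_sin_mul_div_sin_add_sin_mul_div_sin (hα : 0 < α) (hα12 : α ≤ π / 12)
    (hm5 : 5 ≤ m) (hmα : m * α ≤ π / 2) (hj3 : 3 ≤ j) (hjα : j * α ≤ π / 2) :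
    2 < sin (m * α) / sin α + sin (m * (j * α)) / sin (j * α) := by
  have ht : 0 < sin α := sin_pos_of_pos_of_lt_pi hα (by linarith [pi_pos])
  have hB : 0 < sin (j * α) := sin_pos_of_pos_of_lt_pi (by positivity) (by linarith [pi_pos])
  have hP := sqrt_three_mul_sin_le_sin_mul_sub hα.le hα12 hm5 hmα
  rw [div_add_div _ _ ht.ne' hB.ne', lt_div_iff₀ (mul_pos ht hB)]
  rcases le_or_gt 0 (sin (m * (j * α))) with hQ | hQ
  · nlinarith [mul_nonneg hQ ht.le, mul_pos (mul_pos (sqrt_pos.2 three_pos) ht) hB]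
  · have hπ : π < m * (j * α) := by
      by_contra! h
      exact hQ.not_ge (sin_nonneg_of_nonneg_of_le_pi (by positivity) h)
    nlinarith [sin_lt_sin_mul_mul_sin_sub hα hα12 hm5 hmα hj3 hjα hπ, neg_one_le_sin (m * (j * α))]

end

theorem stmt16 (k s i : ℕ) (hk : 6 ≤ k) (hs2 : 2 ≤ s) (hsk : s ≤ k - 3)
    (hi1 : 1 ≤ i) (hi : i ≤ (k - 1) / 2) :
    0 < 2 * ∑ h ∈ Finset.Icc (1 : ℕ) s, Real.cos ((h : ℝ) * π / k) +
        2 * ∑ h ∈ Finset.Icc (1 : ℕ) s, Real.cos ((2 * i + 1 : ℝ) * h * π / k) := by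
  have hk0 : (0 : ℝ) < k := by positivity
  have hsk' : (s : ℝ) + 3 ≤ k := by norm_cast; omega
  obtain ⟨m, hm5, hmα, hsin⟩ := exists_sin_mul_odd_eq (M := 2 * s + 1) hk0
    (by norm_cast; omega) (by linarith)
  set α := π / (2 * k) with hα_def
  have hα : 0 < α := by positivity
  have hα12 : α ≤ π / 12 := div_le_div_of_nonneg_left pi_pos.le (by norm_num)
    (by norm_cast; omega)
  have hj_cast : (2 * i + 1 : ℝ) = (2 * i + 1 : ℕ) := by push_cast; ring
  have hjα : (2 * i + 1 : ℝ) * α ≤ π / 2 := by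
    have : (2 * i + 1 : ℝ) ≤ k := by norm_cast; omega
    nlinarith [show k * α = π / 2 by rw [hα_def]; field_simp]
  have heig (j : ℕ) (hj : Odd j) (hjα : (j : ℝ) * α ≤ π / 2) :
      2 * ∑ h ∈ Icc 1 s, cos (j * h * π / k) = sin (m * (j * α)) / sin (j * α) - 1 := by
    rw [← hsin j hj, ← two_mul_sum_cos_eq_sin_div_sin_sub_one
      (sin_pos_of_pos_of_lt_pi (by positivity [hj.pos]) (by linarith [pi_pos])).ne']
    congr 2 with h
    rw [hα_def]
    field_simp
  have heig1 := heig 1 odd_one (by linarith [pi_pos])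
  have heigj := heig (2 * i + 1) (odd_two_mul_add_one i) (hj_cast ▸ hjα)
  simp only [Nat.cast_one, one_mul] at heig1
  rw [← hj_cast] at heigj
  rw [heig1, heigj]
  linarith [two_lt_sin_mul_div_sin_add_sin_mul_div_sin hα hα12 hm5 hmα
    (by norm_cast; omega) hjα]
end

section
/- Let n be an odd positive integer, let S ⊆ ℤ_n \ {0} satisfy S = −S, and let A be the adjacency matrix of the circulant graph G(ℤ_n, S) (indexed by ℤ_n). Then for every x ∈ ℤ_n \ {0}, x ∈ S if and only if the entry (A²)_{0, 2x} is odd. Consequently, S = { x : 2x = j in ℤ_n and (A²)_{0,j} is odd }, so the graph G(ℤ_n, S) is determined by A². -/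
/-!
`(A²)_{0,2x}` counts the `k ∈ S` with `2x - k ∈ S`. The reflection `k ↦ 2x - k` permutes these,
and since doubling is injective in `ℤ_n` for odd `n`, its only possible fixed point is `k = x`,
which is counted exactly when `x ∈ S`.
-/

/-- Adjacency matrix (with natural number entries) of the circulant graph `G(ℤ_n, S)`. -/
def circAdjNat (n : ℕ) (S : Finset (ZMod n)) : Matrix (ZMod n) (ZMod n) ℕ :=
  fun i j => if j - i ∈ S then 1 else 0

open Finset

theorem Finset.even_card_of_involution {α : Type*} (s : Finset α) (g : α → α)
    (hg_mem : ∀ a ∈ s, g a ∈ s) (hg_ne : ∀ a ∈ s, g a ≠ a) (hg_inv : ∀ a ∈ s, g (g a) = a) :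
    Even #s := by
  rw [← ZMod.natCast_eq_zero_iff_even, card_eq_sum_ones, Nat.cast_sum]
  exact sum_involution (fun a _ => g a) (fun _ _ => by decide) (fun a ha _ => hg_ne a ha)
    (fun a ha => hg_mem a ha) (fun a ha => hg_inv a ha)

theorem odd_card_filter_add_self_sub_mem_iff {G : Type*} [AddCommGroup G] [DecidableEq G]
    (hinj : Function.Injective (fun y : G => y + y)) (S : Finset G) (x : G) :
    Odd #{k ∈ S | x + x - k ∈ S} ↔ x ∈ S := by
  set T := {k ∈ S | x + x - k ∈ S}
  have hT : ∀ k, k ∈ T ↔ k ∈ S ∧ x + x - k ∈ S := fun k => mem_filter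
  have hEven : Even #(T.erase x) := by
    refine (T.erase x).even_card_of_involution (fun k => x + x - k) ?_ ?_ ?_
    · intro k hk
      obtain ⟨hkx, hkT⟩ := mem_erase.mp hk
      refine mem_erase.mpr ⟨fun h => hkx ?_, (hT _).mpr ⟨((hT k).mp hkT).2, ?_⟩⟩
      · exact (add_left_cancel (sub_eq_iff_eq_add.mp h)).symm
      · simpa using ((hT k).mp hkT).1
    · intro k hk h
      exact (mem_erase.mp hk).1 (hinj (eq_sub_iff_add_eq.mp h.symm))
    · intro k _
      abel
  by_cases hx : x ∈ S
  · have hxT : x ∈ T := (hT x).mpr ⟨hx, by simpa using hx⟩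
    simp only [hx, iff_true, ← card_erase_add_one hxT]
    exact hEven.add_one
  · rw [erase_eq_of_notMem (fun h => hx ((hT x).mp h).1)] at hEven
    simpa [hx] using hEven

theorem ZMod.add_self_injective_of_odd {n : ℕ} (hodd : Odd n) :
    Function.Injective (fun y : ZMod n => y + y) := by
  have h2 : IsUnit (2 : ZMod n) := by
    simpa using (ZMod.isUnit_iff_coprime 2 n).mpr (Nat.coprime_two_left.mpr hodd)
  intro a b h
  exact h2.mul_left_cancel (by simpa [two_mul] using h)

theorem circAdjNat_mul_self_apply_zero (n : ℕ) [NeZero n] (S : Finset (ZMod n)) (y : ZMod n) :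
    (circAdjNat n S * circAdjNat n S) 0 y = #{k ∈ S | y - k ∈ S} := by
  simp only [Matrix.mul_apply, circAdjNat, sub_zero, boole_mul]
  rw [card_filter, ← sum_filter, filter_mem_eq_inter, univ_inter]

theorem stmt18_general (n : ℕ) [NeZero n] (hodd : Odd n)
    (S : Finset (ZMod n))
    (A : Matrix (ZMod n) (ZMod n) ℕ) (hA : A = circAdjNat n S) :
    (∀ x : ZMod n, x ≠ 0 → (x ∈ S ↔ Odd ((A * A) 0 (2 * x)))) ∧
      S = Finset.univ.filter (fun x : ZMod n => Odd ((A * A) 0 (2 * x))) := by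
  subst hA
  have key : ∀ x : ZMod n, x ∈ S ↔ Odd ((circAdjNat n S * circAdjNat n S) 0 (2 * x)) := by
    intro x
    rw [circAdjNat_mul_self_apply_zero, two_mul,
      odd_card_filter_add_self_sub_mem_iff (ZMod.add_self_injective_of_odd hodd)]
  exact ⟨fun x _ => key x, by ext x; simp [key]⟩

theorem stmt18 (n : ℕ) [NeZero n] (hodd : Odd n)
    (S : Finset (ZMod n)) (hsym : ∀ x : ZMod n, x ∈ S ↔ -x ∈ S)
    (h0 : (0 : ZMod n) ∉ S)
    (A : Matrix (ZMod n) (ZMod n) ℕ) (hA : A = circAdjNat n S) :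
    (∀ x : ZMod n, x ≠ 0 → (x ∈ S ↔ Odd ((A * A) 0 (2 * x)))) ∧
      S = Finset.univ.filter (fun x : ZMod n => Odd ((A * A) 0 (2 * x))) :=
  stmt18_general n hodd S A hA
end
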